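/- (Lemma 3.1) Let f : ℝ × ℝ → ℝ be a smooth function with f(0,0) = ∂_r f(0,0) = ∂_s f(0,0) = 0 (so its Taylor expansion at the origin contains only quadratic and higher-order terms). Then there exists a constant C > 0, depending only on f and the pressure law P, such that for every T > 0, every smooth solution (ρ, u, b) of the perturbed 2D viscous non-resistive compressible MHD system on [0,T] × ℝ² satisfying the a priori assumption, every t ∈ [0,T], and every choice of r, s from {b₂(t,·), ρ(t,·)}, one has | ∫_{ℝ²} ∂₂u₂ · f(r, s) dx | ≤ C · ‖u₂‖_{L²}^{1/2} · ‖∂₁u₂‖_{L²}^{1/2} · ‖(r, s)‖_{L²}^{1/2} · ‖(∂₂r, ∂₂s)‖_{L²}^{3/2}, where all norms are evaluated at time t. -/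

import Mathlib

open MeasureTheory Set
open scoped ENNReal
open scoped NNReal

noncomputable section

/-- Partial derivative in the first space coordinate. -/
def d1 (f : ℝ × ℝ → ℝ) : ℝ × ℝ → ℝ := fun x => deriv (fun s => f (s, x.2)) x.1

/-- Partial derivative in the second space coordinate. -/
def d2 (f : ℝ × ℝ → ℝ) : ℝ × ℝ → ℝ := fun x => deriv (fun s => f (x.1, s)) x.2

/-- Time derivative of a time-dependent field. -/
def dtt (f : ℝ → ℝ × ℝ → ℝ) : ℝ → ℝ × ℝ → ℝ := fun t x => deriv (fun s => f s x) t

/-- The `L²(ℝ²)` norm, valued in `ℝ≥0∞`. -/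
def L2e (f : ℝ × ℝ → ℝ) : ℝ≥0∞ := eLpNorm f 2 volume

/-- The squared `H^m(ℝ²)` norm: the sum of the squared `L²` norms of all spatial
partial derivatives of order at most `m`. -/
def HSqe (m : ℕ) (f : ℝ × ℝ → ℝ) : ℝ≥0∞ :=
  ∑ k ∈ Finset.range (m + 1), ∑ i ∈ Finset.range (k + 1),
    (L2e (d1^[i] (d2^[k - i] f))) ^ 2

/-- Real-valued `L²` norm. -/
def L2R (f : ℝ × ℝ → ℝ) : ℝ := (L2e f).toReal

/-- Real-valued `H^m` norm of a scalar field. -/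
def HR (m : ℕ) (f : ℝ × ℝ → ℝ) : ℝ := Real.sqrt ((HSqe m f).toReal)

/-- Real-valued `H^m` norm of a two-component vector field. -/
def HRv (m : ℕ) (f g : ℝ × ℝ → ℝ) : ℝ := Real.sqrt ((HSqe m f + HSqe m g).toReal)

/-- The pressure law: a smooth strictly increasing function with `P'(1) = 1`. -/
def IsPressureLaw (P : ℝ → ℝ) : Prop :=
  ContDiff ℝ (⊤ : ℕ∞) P ∧ StrictMono P ∧ deriv P 1 = 1

/-- The perturbed 2D viscous non-resistive compressible MHD system around the
equilibrium `(ρ, u, B) = (0, 0, e₂)`, in component form, on a time set `S`. -/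
structure IsMHD (P : ℝ → ℝ) (S : Set ℝ) (ρ u1 u2 b1 b2 : ℝ → ℝ × ℝ → ℝ) : Prop where
  smooth_rho : ContDiff ℝ (⊤ : ℕ∞) (Function.uncurry ρ)
  smooth_u1 : ContDiff ℝ (⊤ : ℕ∞) (Function.uncurry u1)
  smooth_u2 : ContDiff ℝ (⊤ : ℕ∞) (Function.uncurry u2)
  smooth_b1 : ContDiff ℝ (⊤ : ℕ∞) (Function.uncurry b1)
  smooth_b2 : ContDiff ℝ (⊤ : ℕ∞) (Function.uncurry b2)
  mass : ∀ t ∈ S, ∀ x,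
    dtt ρ t x + (d1 (u1 t) x + d2 (u2 t) x)
      = -(d1 (fun y => ρ t y * u1 t y) x + d2 (fun y => ρ t y * u2 t y) x)
  mom1 : ∀ t ∈ S, ∀ x,
    dtt u1 t x - (d1 (d1 (u1 t)) x + d2 (d2 (u1 t)) x)
      - (d2 (b1 t) x - d1 (b2 t) x)
      + (1 / (ρ t x + 1)) * d1 (fun y => P (ρ t y + 1)) x
    = -(u1 t x * d1 (u1 t) x + u2 t x * d2 (u1 t) x)
      - (ρ t x / (ρ t x + 1)) * (d1 (d1 (u1 t)) x + d2 (d2 (u1 t)) x)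
      + (1 / (ρ t x + 1)) * (b1 t x * d1 (b1 t) x + b2 t x * d2 (b1 t) x)
      - (1 / (2 * (ρ t x + 1))) * d1 (fun y => (b1 t y) ^ 2 + (b2 t y) ^ 2) x
      - (ρ t x / (ρ t x + 1)) * (d2 (b1 t) x - d1 (b2 t) x)
  mom2 : ∀ t ∈ S, ∀ x,
    dtt u2 t x - (d1 (d1 (u2 t)) x + d2 (d2 (u2 t)) x)
      + (1 / (ρ t x + 1)) * d2 (fun y => P (ρ t y + 1)) x
    = -(u1 t x * d1 (u2 t) x + u2 t x * d2 (u2 t) x)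
      - (ρ t x / (ρ t x + 1)) * (d1 (d1 (u2 t)) x + d2 (d2 (u2 t)) x)
      + (1 / (ρ t x + 1)) * (b1 t x * d1 (b2 t) x + b2 t x * d2 (b2 t) x)
      - (1 / (2 * (ρ t x + 1))) * d2 (fun y => (b1 t y) ^ 2 + (b2 t y) ^ 2) x
  ind1 : ∀ t ∈ S, ∀ x,
    dtt b1 t x - d2 (u1 t) x
    = -(u1 t x * d1 (b1 t) x + u2 t x * d2 (b1 t) x)
      + (b1 t x * d1 (u1 t) x + b2 t x * d2 (u1 t) x)
      - b1 t x * (d1 (u1 t) x + d2 (u2 t) x)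
  ind2 : ∀ t ∈ S, ∀ x,
    dtt b2 t x + d1 (u1 t) x
    = -(u1 t x * d1 (b2 t) x + u2 t x * d2 (b2 t) x)
      + (b1 t x * d1 (u2 t) x + b2 t x * d2 (u2 t) x)
      - b2 t x * (d1 (u1 t) x + d2 (u2 t) x)
  divb : ∀ t ∈ S, ∀ x, d1 (b1 t) x + d2 (b2 t) x = 0

/-- The modified effective viscous flux `Γ = b₂ + P(1+ρ) − P(1) + |b₂|²/2`. -/
def Gam (P : ℝ → ℝ) (ρ b2 : ℝ → ℝ × ℝ → ℝ) : ℝ → ℝ × ℝ → ℝ :=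
  fun t x => b2 t x + P (1 + ρ t x) - P 1 + (b2 t x) ^ 2 / 2

/-- The auxiliary quantity `Ω = ∂₂b₁ (1 + b₂) − ∂₁Γ`. -/
def Om (P : ℝ → ℝ) (ρ b1 b2 : ℝ → ℝ × ℝ → ℝ) : ℝ → ℝ × ℝ → ℝ :=
  fun t x => d2 (b1 t) x * (1 + b2 t x) - d1 (Gam P ρ b2 t) x

/-- Squared `H³` norm of the velocity gradient `∇u`. -/
def gradH3Sq (u1 u2 : ℝ × ℝ → ℝ) : ℝ≥0∞ :=
  HSqe 3 (d1 u1) + HSqe 3 (d2 u1) + HSqe 3 (d1 u2) + HSqe 3 (d2 u2)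

/-- Energy `E₀`. -/
def E0 (ρ u1 u2 b1 b2 : ℝ → ℝ × ℝ → ℝ) (t : ℝ) : ℝ≥0∞ :=
  (⨆ τ ∈ Icc (0 : ℝ) t,
      (HSqe 3 (u1 τ) + HSqe 3 (u2 τ) + HSqe 3 (b1 τ) + HSqe 3 (b2 τ) + HSqe 3 (ρ τ)))
    + ∫⁻ τ in Icc (0 : ℝ) t, gradH3Sq (u1 τ) (u2 τ)

/-- Energy `E₁`. -/
def E1 (ρ : ℝ → ℝ × ℝ → ℝ) (t : ℝ) : ℝ≥0∞ :=
  ∫⁻ τ in Icc (0 : ℝ) t, HSqe 2 (d2 (ρ τ))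

/-- Energy `E₂`. -/
def E2 (b1 b2 : ℝ → ℝ × ℝ → ℝ) (t : ℝ) : ℝ≥0∞ :=
  ∫⁻ τ in Icc (0 : ℝ) t, (HSqe 2 (d2 (b1 τ)) + HSqe 2 (d2 (b2 τ)))

/-- Energy `E₃`. -/
def E3 (P : ℝ → ℝ) (ρ b1 b2 : ℝ → ℝ × ℝ → ℝ) (t : ℝ) : ℝ≥0∞ :=
  ∫⁻ τ in Icc (0 : ℝ) t,
    (HSqe 2 (Om P ρ b1 b2 τ)
      + (L2e (d1 (Gam P ρ b2 τ))) ^ 2 + (L2e (d2 (Gam P ρ b2 τ))) ^ 2)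

/-- Energy `E₄`. -/
def E4 (ρ u1 b1 b2 : ℝ → ℝ × ℝ → ℝ) (t : ℝ) : ℝ≥0∞ :=
  ∫⁻ τ in Icc (0 : ℝ) t, ∫⁻ x,
    ENNReal.ofReal (((u1 τ x) ^ 2 + (b1 τ x) ^ 2)
      * ((d1^[3] (ρ τ) x) ^ 2 + (d1^[3] (b2 τ) x) ^ 2))

/-- Energy `E₅`. -/
def E5 (P : ℝ → ℝ) (ρ b2 : ℝ → ℝ × ℝ → ℝ) (t : ℝ) : ℝ≥0∞ :=
  ∫⁻ τ in Icc (0 : ℝ) t, ∫⁻ x,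
    ENNReal.ofReal ((Gam P ρ b2 τ x) ^ 2
      * ((d1^[3] (ρ τ) x) ^ 2 + (d1^[3] (b2 τ) x) ^ 2))

/-- Energy `E₆`. -/
def E6 (P : ℝ → ℝ) (ρ u1 u2 b1 b2 : ℝ → ℝ × ℝ → ℝ) (t : ℝ) : ℝ≥0∞ :=
  ∫⁻ τ in Icc (0 : ℝ) t,
    ((L2e (dtt ρ τ)) ^ 2 + (L2e (dtt u1 τ)) ^ 2 + (L2e (dtt u2 τ)) ^ 2
      + (L2e (dtt b1 τ)) ^ 2 + (L2e (dtt b2 τ)) ^ 2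
      + (L2e (dtt (Om P ρ b1 b2) τ)) ^ 2 + (L2e (dtt (Gam P ρ b2) τ)) ^ 2)

/-- Total energy. -/
def Etot (P : ℝ → ℝ) (ρ u1 u2 b1 b2 : ℝ → ℝ × ℝ → ℝ) (t : ℝ) : ℝ≥0∞ :=
  E0 ρ u1 u2 b1 b2 t + E1 ρ t + E2 b1 b2 t + E3 P ρ b1 b2 t
    + E4 ρ u1 b1 b2 t + E5 P ρ b2 t + E6 P ρ u1 u2 b1 b2 t

/-- The a priori assumption: all the norms appearing in the energies are finite, the
basic energy stays below `1`, and `‖ρ(t)‖_{L^∞} ≤ 1/2` on `[0, T]`. -/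
def APriori (P : ℝ → ℝ) (T : ℝ) (ρ u1 u2 b1 b2 : ℝ → ℝ × ℝ → ℝ) : Prop :=
  Etot P ρ u1 u2 b1 b2 T < ⊤ ∧
  (∀ t ∈ Icc (0 : ℝ) T,
      HSqe 3 (ρ t) < ⊤ ∧ HSqe 3 (u1 t) < ⊤ ∧ HSqe 3 (u2 t) < ⊤ ∧
      HSqe 3 (b1 t) < ⊤ ∧ HSqe 3 (b2 t) < ⊤ ∧
      gradH3Sq (u1 t) (u2 t) < ⊤ ∧
      HSqe 2 (d2 (ρ t)) < ⊤ ∧ HSqe 2 (d2 (b1 t)) < ⊤ ∧ HSqe 2 (d2 (b2 t)) < ⊤ ∧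
      HSqe 2 (Om P ρ b1 b2 t) < ⊤ ∧
      L2e (d1 (Gam P ρ b2 t)) < ⊤ ∧ L2e (d2 (Gam P ρ b2 t)) < ⊤ ∧
      L2e (dtt ρ t) < ⊤ ∧ L2e (dtt u1 t) < ⊤ ∧ L2e (dtt u2 t) < ⊤ ∧
      L2e (dtt b1 t) < ⊤ ∧ L2e (dtt b2 t) < ⊤ ∧
      L2e (dtt (Om P ρ b1 b2) t) < ⊤ ∧ L2e (dtt (Gam P ρ b2) t) < ⊤) ∧
  (∀ t ∈ Icc (0 : ℝ) T, E0 ρ u1 u2 b1 b2 t ≤ 1) ∧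
  (∀ t ∈ Icc (0 : ℝ) T, ∀ x, |ρ t x| ≤ 1 / 2)




/-- squared L² norm as lintegral -/
def Sq {α : Type*} [MeasurableSpace α] (μ : Measure α) (f : α → ℝ) : ℝ≥0∞ :=
  ∫⁻ a, (‖f a‖₊ : ℝ≥0∞) ^ 2 ∂μ

lemma enn_of_abs (a : ℝ) : (‖a‖₊ : ℝ≥0∞) = ENNReal.ofReal |a| := by
  rw [ENNReal.ofReal_eq_coe_nnreal (abs_nonneg a)]; norm_cast

lemma enn_sq (a : ℝ) : (‖a‖₊ : ℝ≥0∞) ^ 2 = ENNReal.ofReal (a ^ 2) := by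
  rw [enn_of_abs, ← ENNReal.ofReal_pow (abs_nonneg a), sq_abs]

lemma enn_mul (a b : ℝ) : (‖a * b‖₊ : ℝ≥0∞) = (‖a‖₊ : ℝ≥0∞) * ‖b‖₊ := by
  push_cast [nnnorm_mul]; ring


lemma one_le_inf : (1 : WithTop ℕ∞) ≤ ((⊤:ℕ∞) : WithTop ℕ∞) := by exact_mod_cast le_top
lemma inf_succ_le : ((⊤:ℕ∞) : WithTop ℕ∞) + 1 ≤ ((⊤:ℕ∞) : WithTop ℕ∞) := by norm_cast

-- Section A : derivatives
lemma hasDerivAt_slice1 {g : ℝ × ℝ → ℝ} (hg : Differentiable ℝ g) (a b : ℝ) :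
    HasDerivAt (fun s => g (s, b)) (fderiv ℝ g (a, b) (1, 0)) a := by
  have h := (hg (a, b)).hasFDerivAt.comp_hasDerivAt a
    ((hasDerivAt_id a).prodMk (hasDerivAt_const a b))
  exact h

lemma hasDerivAt_slice2 {g : ℝ × ℝ → ℝ} (hg : Differentiable ℝ g) (a b : ℝ) :
    HasDerivAt (fun s => g (a, s)) (fderiv ℝ g (a, b) (0, 1)) b := by
  have h := (hg (a, b)).hasFDerivAt.comp_hasDerivAt b
    ((hasDerivAt_const b a).prodMk (hasDerivAt_id b))
  exact h

lemma d1_eq {g : ℝ × ℝ → ℝ} (hg : Differentiable ℝ g) (x : ℝ × ℝ) :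
    d1 g x = fderiv ℝ g x (1, 0) := by
  have := (hasDerivAt_slice1 hg x.1 x.2).deriv
  simpa [d1] using this

lemma d2_eq {g : ℝ × ℝ → ℝ} (hg : Differentiable ℝ g) (x : ℝ × ℝ) :
    d2 g x = fderiv ℝ g x (0, 1) := by
  have := (hasDerivAt_slice2 hg x.1 x.2).deriv
  simpa [d2] using this

lemma contDiff_d1 {g : ℝ × ℝ → ℝ} (hg : ContDiff ℝ (⊤ : ℕ∞) g) :
    ContDiff ℝ (⊤ : ℕ∞) (d1 g) := by
  have h : d1 g = fun x => fderiv ℝ g x (1, 0) :=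
    funext (d1_eq (hg.differentiable (by simp)))
  rw [h]
  exact (hg.fderiv_right inf_succ_le).clm_apply contDiff_const

lemma contDiff_d2 {g : ℝ × ℝ → ℝ} (hg : ContDiff ℝ (⊤ : ℕ∞) g) :
    ContDiff ℝ (⊤ : ℕ∞) (d2 g) := by
  have h : d2 g = fun x => fderiv ℝ g x (0, 1) :=
    funext (d2_eq (hg.differentiable (by simp)))
  rw [h]
  exact (hg.fderiv_right inf_succ_le).clm_apply contDiff_const

lemma contDiff_slice2 {g : ℝ × ℝ → ℝ} (hg : ContDiff ℝ (⊤ : ℕ∞) g) (a : ℝ) :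
    ContDiff ℝ (⊤ : ℕ∞) (fun y => g (a, y)) :=
  hg.comp (contDiff_const.prodMk contDiff_id)

lemma contDiff_slice1 {g : ℝ × ℝ → ℝ} (hg : ContDiff ℝ (⊤ : ℕ∞) g) (b : ℝ) :
    ContDiff ℝ (⊤ : ℕ∞) (fun x => g (x, b)) :=
  hg.comp (contDiff_id.prodMk contDiff_const)

lemma contDiff_flip {g : ℝ × ℝ → ℝ} (hg : ContDiff ℝ (⊤ : ℕ∞) g) :
    ContDiff ℝ (⊤ : ℕ∞) (g ∘ Prod.swap) :=
  hg.comp (contDiff_snd.prodMk contDiff_fst)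

lemma d1_flip (g : ℝ × ℝ → ℝ) : d1 (g ∘ Prod.swap) = (d2 g) ∘ Prod.swap := rfl

lemma deriv_slice2 (g : ℝ × ℝ → ℝ) (a : ℝ) :
    deriv (fun y => g (a, y)) = fun y => d2 g (a, y) := rfl

lemma deriv_slice1 (g : ℝ × ℝ → ℝ) (b : ℝ) :
    deriv (fun x => g (x, b)) = fun x => d1 g (x, b) := rfl

section SecB
open Filter

variable {α : Type*} [MeasurableSpace α] {μ : Measure α}

lemma rpow_two_eq (x : ℝ≥0∞) : x ^ (2:ℝ) = x ^ (2:ℕ) := by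
  rw [← ENNReal.rpow_natCast]; norm_num

lemma lint_CS (μ : Measure α) {F G : α → ℝ≥0∞}
    (hF : AEMeasurable F μ) (hG : AEMeasurable G μ) :
    ∫⁻ a, F a * G a ∂μ ≤
      (∫⁻ a, F a ^ 2 ∂μ) ^ (1/2 : ℝ) * (∫⁻ a, G a ^ 2 ∂μ) ^ (1/2 : ℝ) := by
  have hpq : (2:ℝ).HolderConjugate 2 := Real.HolderConjugate.two_two
  have h := ENNReal.lintegral_mul_le_Lp_mul_Lq μ hpq hF hG
  simp only [Pi.mul_apply, rpow_two_eq] at h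
  exact h

lemma rpow_half_sq (x : ℝ≥0∞) : (x ^ (1/2 : ℝ)) ^ 2 = x := by
  rw [← ENNReal.rpow_natCast (x ^ (1/2:ℝ)) 2, ← ENNReal.rpow_mul]
  norm_num

lemma le_rpow_half {b c : ℝ≥0∞} (h : b ^ 2 ≤ c) : b ≤ c ^ (1/2 : ℝ) := by
  have h2 := ENNReal.rpow_le_rpow (x := b ^ (2:ℕ)) (y := c) (by exact_mod_cast h)
    (by norm_num : (0:ℝ) ≤ 1/2)
  rwa [← ENNReal.rpow_natCast b 2, ← ENNReal.rpow_mul,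
    (by norm_num : ((2:ℕ):ℝ) * (1/2) = 1), ENNReal.rpow_one] at h2

lemma exists_small_below {g : ℝ → ℝ} (hgi : Integrable g) {ε : ℝ} (hε : 0 < ε) (A : ℝ) :
    ∃ b, b < A ∧ |g b| < ε := by
  by_contra h
  push_neg at h
  have hfin := hgi.2
  have htop : (⊤ : ℝ≥0∞) ≤ ∫⁻ a, (‖g a‖₊ : ℝ≥0∞) := by
    calc (⊤ : ℝ≥0∞) = ENNReal.ofReal ε * volume (Set.Iio A) := by
          rw [Real.volume_Iio, ENNReal.mul_top (by simp [ENNReal.ofReal_eq_zero, not_le.2 hε])]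
      _ = ∫⁻ _ in Set.Iio A, (ENNReal.ofReal ε) := by rw [setLIntegral_const]
      _ ≤ ∫⁻ a in Set.Iio A, (‖g a‖₊ : ℝ≥0∞) := by
          refine lintegral_mono_ae ((ae_restrict_iff' measurableSet_Iio).2 (ae_of_all _ ?_))
          intro x hx
          rw [enn_of_abs]
          exact ENNReal.ofReal_le_ofReal (h x hx)
      _ ≤ ∫⁻ a, (‖g a‖₊ : ℝ≥0∞) := setLIntegral_le_lintegral _ _
  rw [HasFiniteIntegral] at hfin
  exact absurd hfin (by rw [not_lt]; exact htop)

lemma exists_small_above {g : ℝ → ℝ} (hgi : Integrable g) {ε : ℝ} (hε : 0 < ε) (A : ℝ) :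
    ∃ b, A < b ∧ |g b| < ε := by
  by_contra h
  push_neg at h
  have hfin := hgi.2
  have htop : (⊤ : ℝ≥0∞) ≤ ∫⁻ a, (‖g a‖₊ : ℝ≥0∞) := by
    calc (⊤ : ℝ≥0∞) = ENNReal.ofReal ε * volume (Set.Ioi A) := by
          rw [Real.volume_Ioi, ENNReal.mul_top (by simp [ENNReal.ofReal_eq_zero, not_le.2 hε])]
      _ = ∫⁻ _ in Set.Ioi A, (ENNReal.ofReal ε) := by rw [setLIntegral_const]
      _ ≤ ∫⁻ a in Set.Ioi A, (‖g a‖₊ : ℝ≥0∞) := by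
          refine lintegral_mono_ae ((ae_restrict_iff' measurableSet_Ioi).2 (ae_of_all _ ?_))
          intro x hx
          rw [enn_of_abs]
          exact ENNReal.ofReal_le_ofReal (h x hx)
      _ ≤ ∫⁻ a, (‖g a‖₊ : ℝ≥0∞) := setLIntegral_le_lintegral _ _
  rw [HasFiniteIntegral] at hfin
  exact absurd hfin (by rw [not_lt]; exact htop)

end SecB
section SecC

lemma enn_sq_real (a : ℝ) : ((‖a ^ 2‖₊ : ℝ≥0∞)) = (‖a‖₊ : ℝ≥0∞) ^ 2 := by
  push_cast [nnnorm_pow]; ring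

lemma ptbound {w : ℝ → ℝ} (hw : ContDiff ℝ (⊤:ℕ∞) w)
    (hw2 : (∫⁻ y, (‖w y‖₊ : ℝ≥0∞) ^ 2) ≠ ⊤) (x : ℝ) :
    (‖w x‖₊ : ℝ≥0∞) ^ 2 ≤ ∫⁻ y, 2 * ((‖w y‖₊ : ℝ≥0∞) * ‖deriv w y‖₊) := by
  set I := ∫⁻ y, 2 * ((‖w y‖₊ : ℝ≥0∞) * ‖deriv w y‖₊) with hI
  rcases eq_or_ne I ⊤ with h | h
  · simp [h]
  have hwc : Continuous w := hw.continuous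
  have hw' : Continuous (deriv w) := hw.continuous_deriv one_le_inf
  set g : ℝ → ℝ := fun y => 2 * w y * deriv w y with hg
  have hgc : Continuous g := (continuous_const.mul hwc).mul hw'
  have hderiv : ∀ y, HasDerivAt (fun t => w t ^ 2) (g y) y := by
    intro y
    have h2 := (((hw.differentiable (by simp)) y).hasDerivAt).fun_pow 2
    simpa [hg] using h2
  have hgen : ∀ y, (‖g y‖₊ : ℝ≥0∞) = 2 * ((‖w y‖₊ : ℝ≥0∞) * ‖deriv w y‖₊) := by
    intro y
    rw [hg]
    simp only [enn_mul]
    norm_num [enn_of_abs, mul_assoc]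
  have hgi : Integrable g := by
    refine ⟨hgc.aestronglyMeasurable, ?_⟩
    rw [HasFiniteIntegral]
    have : ∀ y, (‖g y‖₊ : ℝ≥0∞) = 2 * ((‖w y‖₊ : ℝ≥0∞) * ‖deriv w y‖₊) := hgen
    erw [lintegral_congr fun y => this y]
    exact h.lt_top
  have hw2i : Integrable (fun y => w y ^ 2) := by
    refine ⟨(hwc.pow 2).aestronglyMeasurable, ?_⟩
    rw [HasFiniteIntegral]
    have : ∀ y, ((‖w y ^ 2‖₊ : ℝ≥0∞)) = (‖w y‖₊ : ℝ≥0∞) ^ 2 := fun y => enn_sq_real (w y)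
    erw [lintegral_congr fun y => this y]
    exact hw2.lt_top
  have habs : Integrable (fun y => |g y|) := hgi.abs
  set D := ∫ y, |g y| with hD
  have hDI : ENNReal.ofReal D = I := by
    rw [hD, MeasureTheory.ofReal_integral_eq_lintegral_ofReal habs
      (ae_of_all _ fun y => abs_nonneg _)]
    rw [hI]
    refine lintegral_congr fun y => ?_
    rw [← hgen y, enn_of_abs]
  have key : ∀ ε > (0:ℝ), w x ^ 2 ≤ D + ε := by
    intro ε hε
    obtain ⟨b, hbx, hbε⟩ := exists_small_below hw2i hε x
    have hftc := intervalIntegral.integral_eq_sub_of_hasDerivAt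
      (f := fun t => w t ^ 2) (f' := g) (a := b) (b := x)
      (fun t _ => hderiv t) (hgc.intervalIntegrable b x)
    have hle : ∫ t in b..x, g t ≤ D := by
      rw [intervalIntegral.integral_of_le hbx.le]
      calc ∫ t in Set.Ioc b x, g t ≤ ∫ t in Set.Ioc b x, |g t| := by
            refine setIntegral_mono_on (hgi.integrableOn) (habs.integrableOn)
              measurableSet_Ioc (fun t _ => le_abs_self _)
        _ ≤ D := setIntegral_le_integral habs (ae_of_all _ fun y => abs_nonneg _)
    have : w x ^ 2 = w b ^ 2 + ∫ t in b..x, g t := by rw [hftc]; ring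
    rw [this]
    have hwb : w b ^ 2 ≤ ε := by
      have := hbε
      rw [abs_of_nonneg (sq_nonneg _)] at this
      linarith
    linarith
  have hwD : w x ^ 2 ≤ D := le_of_forall_pos_le_add fun ε hε => key ε hε
  calc (‖w x‖₊ : ℝ≥0∞) ^ 2 = ENNReal.ofReal (w x ^ 2) := enn_sq (w x)
    _ ≤ ENNReal.ofReal D := ENNReal.ofReal_le_ofReal hwD
    _ = I := hDI

end SecC
section SecD

lemma lint_prod2 {G : ℝ × ℝ → ℝ≥0∞} (hG : Measurable G) :
    ∫⁻ z, G z = ∫⁻ x, ∫⁻ y, G (x, y) :=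
  MeasureTheory.lintegral_prod G hG.aemeasurable

lemma lint_prod2_symm {G : ℝ × ℝ → ℝ≥0∞} (hG : Measurable G) :
    ∫⁻ z, G z = ∫⁻ y, ∫⁻ x, G (x, y) :=
  MeasureTheory.lintegral_prod_symm G hG.aemeasurable

lemma meas_lint_snd {G : ℝ × ℝ → ℝ≥0∞} (hG : Measurable G) :
    Measurable fun x => ∫⁻ y, G (x, y) := hG.lintegral_prod_right'

lemma meas_lint_fst {G : ℝ × ℝ → ℝ≥0∞} (hG : Measurable G) :
    Measurable fun y => ∫⁻ x, G (x, y) :=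
  (hG.comp measurable_swap).lintegral_prod_right'

lemma ae_slice_fin_x {G : ℝ × ℝ → ℝ≥0∞} (hG : Measurable G) (h : ∫⁻ z, G z ≠ ⊤) :
    ∀ᵐ x : ℝ, (∫⁻ y, G (x, y)) ≠ ⊤ := by
  have h2 := ae_lt_top (meas_lint_snd hG) (by rw [← lint_prod2 hG]; exact h)
  filter_upwards [h2] with x hx using hx.ne

lemma ae_slice_fin_y {G : ℝ × ℝ → ℝ≥0∞} (hG : Measurable G) (h : ∫⁻ z, G z ≠ ⊤) :
    ∀ᵐ y : ℝ, (∫⁻ x, G (x, y)) ≠ ⊤ := by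
  have h2 := ae_lt_top (meas_lint_fst hG) (by rw [← lint_prod2_symm hG]; exact h)
  filter_upwards [h2] with y hy using hy.ne

lemma Sq_flip {g : ℝ × ℝ → ℝ} (hg : Continuous g) :
    Sq volume (g ∘ Prod.swap) = Sq volume g := by
  unfold Sq
  exact (MeasureTheory.Measure.measurePreserving_swap (μ := (volume : Measure ℝ)) (ν := volume)).lintegral_comp
    ((hg.measurable.nnnorm.coe_nnreal_ennreal).pow_const 2)

lemma supslice {g : ℝ × ℝ → ℝ} (hg : ContDiff ℝ (⊤:ℕ∞) g)
    (h2 : Sq volume g ≠ ⊤) (h1 : Sq volume (d1 g) ≠ ⊤) (a : ℝ) :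
    (∫⁻ y, (‖g (a, y)‖₊ : ℝ≥0∞) ^ 2) ≤
      2 * ((Sq volume g) ^ (1/2:ℝ) * (Sq volume (d1 g)) ^ (1/2:ℝ)) := by
  have hgc := hg.continuous
  have hd1c := (contDiff_d1 hg).continuous
  have hmeasg : Measurable fun z : ℝ × ℝ => (‖g z‖₊ : ℝ≥0∞) ^ 2 :=
    (hgc.measurable.nnnorm.coe_nnreal_ennreal).pow_const 2
  have hmeas2 : Measurable fun z : ℝ × ℝ => 2 * ((‖g z‖₊ : ℝ≥0∞) * ‖d1 g z‖₊) :=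
    (measurable_const.mul ((hgc.measurable.nnnorm.coe_nnreal_ennreal).mul
      (hd1c.measurable.nnnorm.coe_nnreal_ennreal)))
  have hae : ∀ᵐ y : ℝ, (∫⁻ x, (‖g (x, y)‖₊ : ℝ≥0∞) ^ 2) ≠ ⊤ :=
    ae_slice_fin_y hmeasg h2
  have hpt : ∀ᵐ y : ℝ, (‖g (a, y)‖₊ : ℝ≥0∞) ^ 2 ≤
      ∫⁻ x, 2 * ((‖g (x, y)‖₊ : ℝ≥0∞) * ‖d1 g (x, y)‖₊) := by
    filter_upwards [hae] with y hy
    have hw : ContDiff ℝ (⊤:ℕ∞) (fun x => g (x, y)) := contDiff_slice1 hg y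
    have hp := ptbound hw hy a
    simpa only [deriv_slice1] using hp
  calc (∫⁻ y, (‖g (a, y)‖₊ : ℝ≥0∞) ^ 2)
      ≤ ∫⁻ y, ∫⁻ x, 2 * ((‖g (x, y)‖₊ : ℝ≥0∞) * ‖d1 g (x, y)‖₊) := lintegral_mono_ae hpt
    _ = ∫⁻ z : ℝ × ℝ, 2 * ((‖g z‖₊ : ℝ≥0∞) * ‖d1 g z‖₊) := (lint_prod2_symm hmeas2).symm
    _ = 2 * ∫⁻ z : ℝ × ℝ, (‖g z‖₊ : ℝ≥0∞) * ‖d1 g z‖₊ := by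
        erw [lintegral_const_mul _ ((hgc.measurable.nnnorm.coe_nnreal_ennreal).mul
          (hd1c.measurable.nnnorm.coe_nnreal_ennreal))]
        rfl
    _ ≤ 2 * ((Sq volume g) ^ (1/2:ℝ) * (Sq volume (d1 g)) ^ (1/2:ℝ)) :=
        mul_le_mul_right (lint_CS volume
          (hgc.measurable.nnnorm.coe_nnreal_ennreal).aemeasurable
          (hd1c.measurable.nnnorm.coe_nnreal_ennreal).aemeasurable) 2

end SecD
section SecE

lemma rpow_quarter (x : ℝ≥0∞) : (x ^ (1/2:ℝ)) ^ (1/2:ℝ) = x ^ (1/4:ℝ) := by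
  rw [← ENNReal.rpow_mul]; norm_num

lemma slice_meas {f : ℝ × ℝ → ℝ} (hf : Continuous f) (y : ℝ) :
    Measurable fun x => (‖f (x, y)‖₊ : ℝ≥0∞) :=
  ((hf.comp (continuous_id.prodMk continuous_const)).measurable).nnnorm.coe_nnreal_ennreal

lemma sqrt2_mul_sqrt2 : ((2:ℝ≥0∞) ^ (1/2:ℝ)) * (2:ℝ≥0∞) ^ (1/2:ℝ) = 2 := by
  rw [← ENNReal.rpow_add _ _ (two_ne_zero) ENNReal.ofNat_ne_top]
  norm_num

lemma tri {u a c : ℝ × ℝ → ℝ} (hu : ContDiff ℝ (⊤:ℕ∞) u) (ha : ContDiff ℝ (⊤:ℕ∞) a)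
    (hc : Continuous c)
    (hSu : Sq volume u ≠ ⊤) (hSu1 : Sq volume (d1 u) ≠ ⊤)
    (hSa : Sq volume a ≠ ⊤) (hSa2 : Sq volume (d2 a) ≠ ⊤) :
    ∫⁻ z : ℝ × ℝ, (‖u z‖₊ : ℝ≥0∞) * ‖a z‖₊ * ‖c z‖₊ ≤
      2 * (Sq volume u) ^ (1/4:ℝ) * (Sq volume (d1 u)) ^ (1/4:ℝ)
        * (Sq volume a) ^ (1/4:ℝ) * (Sq volume (d2 a)) ^ (1/4:ℝ)
        * (Sq volume c) ^ (1/2:ℝ) := by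
  have huc := hu.continuous
  have hac := ha.continuous
  have hu1c := (contDiff_d1 hu).continuous
  have mu : Measurable fun z : ℝ × ℝ => (‖u z‖₊ : ℝ≥0∞) :=
    huc.measurable.nnnorm.coe_nnreal_ennreal
  have ma : Measurable fun z : ℝ × ℝ => (‖a z‖₊ : ℝ≥0∞) :=
    hac.measurable.nnnorm.coe_nnreal_ennreal
  have mc : Measurable fun z : ℝ × ℝ => (‖c z‖₊ : ℝ≥0∞) :=
    hc.measurable.nnnorm.coe_nnreal_ennreal
  have mu1 : Measurable fun z : ℝ × ℝ => (‖d1 u z‖₊ : ℝ≥0∞) :=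
    hu1c.measurable.nnnorm.coe_nnreal_ennreal
  set M : ℝ → ℝ≥0∞ := fun y => ∫⁻ x, 2 * ((‖u (x, y)‖₊ : ℝ≥0∞) * ‖d1 u (x, y)‖₊) with hM
  set A : ℝ → ℝ≥0∞ := fun y => (∫⁻ x, (‖a (x, y)‖₊ : ℝ≥0∞) ^ 2) ^ (1/2:ℝ) with hA
  set Cc : ℝ → ℝ≥0∞ := fun y => (∫⁻ x, (‖c (x, y)‖₊ : ℝ≥0∞) ^ 2) ^ (1/2:ℝ) with hC
  have mM : Measurable M := meas_lint_fst (measurable_const.mul (mu.mul mu1))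
  have mA : Measurable A := (meas_lint_fst (ma.pow_const 2)).pow_const _
  have mC : Measurable Cc := (meas_lint_fst (mc.pow_const 2)).pow_const _
  have step1 : (∫⁻ z : ℝ × ℝ, (‖u z‖₊ : ℝ≥0∞) * ‖a z‖₊ * ‖c z‖₊)
      = ∫⁻ y, ∫⁻ x, (‖u (x,y)‖₊ : ℝ≥0∞) * ‖a (x,y)‖₊ * ‖c (x,y)‖₊ :=
    lint_prod2_symm ((mu.mul ma).mul mc)
  have hae : ∀ᵐ y : ℝ, (∫⁻ x, (‖u (x, y)‖₊ : ℝ≥0∞) ^ 2) ≠ ⊤ :=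
    ae_slice_fin_y (mu.pow_const 2) hSu
  have step2 : ∀ᵐ y : ℝ, (∫⁻ x, (‖u (x,y)‖₊ : ℝ≥0∞) * ‖a (x,y)‖₊ * ‖c (x,y)‖₊)
      ≤ M y ^ (1/2:ℝ) * (A y * Cc y) := by
    filter_upwards [hae] with y hy
    have hsup : ∀ x, (‖u (x,y)‖₊ : ℝ≥0∞) ≤ M y ^ (1/2:ℝ) := by
      intro x
      refine le_rpow_half ?_
      have hp := ptbound (contDiff_slice1 hu y) hy x
      simpa only [deriv_slice1] using hp
    calc (∫⁻ x, (‖u (x,y)‖₊ : ℝ≥0∞) * ‖a (x,y)‖₊ * ‖c (x,y)‖₊)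
        ≤ ∫⁻ x, M y ^ (1/2:ℝ) * ((‖a (x,y)‖₊ : ℝ≥0∞) * ‖c (x,y)‖₊) := by
          refine lintegral_mono fun x => ?_
          rw [mul_assoc]
          exact mul_le_mul_left (hsup x) _
      _ = M y ^ (1/2:ℝ) * ∫⁻ x, (‖a (x,y)‖₊ : ℝ≥0∞) * ‖c (x,y)‖₊ :=
          lintegral_const_mul _ ((slice_meas hac y).mul (slice_meas hc y))
      _ ≤ M y ^ (1/2:ℝ) * (A y * Cc y) :=
          mul_le_mul_right (lint_CS volume (slice_meas hac y).aemeasurable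
            (slice_meas hc y).aemeasurable) _
  -- step 3 : A y ≤ Abar
  set Abar : ℝ≥0∞ := (2 * ((Sq volume a) ^ (1/2:ℝ) * (Sq volume (d2 a)) ^ (1/2:ℝ))) ^ (1/2:ℝ)
    with hAbar
  have step3 : ∀ y, A y ≤ Abar := by
    intro y
    have hsw := supslice (g := a ∘ Prod.swap) (contDiff_flip ha)
      (by rw [Sq_flip hac]; exact hSa)
      (by rw [d1_flip, Sq_flip (contDiff_d2 ha).continuous]; exact hSa2) y
    rw [d1_flip, Sq_flip hac, Sq_flip (contDiff_d2 ha).continuous] at hsw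
    exact ENNReal.rpow_le_rpow hsw (by norm_num)
  -- step 4/5
  have step45 : (∫⁻ y, M y ^ (1/2:ℝ) * (A y * Cc y))
      ≤ Abar * ((∫⁻ y, M y) ^ (1/2:ℝ) * (∫⁻ y, Cc y ^ 2) ^ (1/2:ℝ)) := by
    calc (∫⁻ y, M y ^ (1/2:ℝ) * (A y * Cc y))
        ≤ ∫⁻ y, Abar * (M y ^ (1/2:ℝ) * Cc y) := by
          refine lintegral_mono fun y => ?_
          calc M y ^ (1/2:ℝ) * (A y * Cc y) ≤ M y ^ (1/2:ℝ) * (Abar * Cc y) :=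
                mul_le_mul_right (mul_le_mul_left (step3 y) _) _
            _ = Abar * (M y ^ (1/2:ℝ) * Cc y) := by ring
      _ = Abar * ∫⁻ y, M y ^ (1/2:ℝ) * Cc y :=
          lintegral_const_mul _ ((mM.pow_const _).mul mC)
      _ ≤ Abar * ((∫⁻ y, (M y ^ (1/2:ℝ)) ^ 2) ^ (1/2:ℝ) * (∫⁻ y, Cc y ^ 2) ^ (1/2:ℝ)) :=
          mul_le_mul_right (lint_CS volume (mM.pow_const _).aemeasurable mC.aemeasurable) _
      _ = Abar * ((∫⁻ y, M y) ^ (1/2:ℝ) * (∫⁻ y, Cc y ^ 2) ^ (1/2:ℝ)) := by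
          simp only [rpow_half_sq]
  -- step 6
  have step6 : (∫⁻ y, M y) ≤ 2 * ((Sq volume u) ^ (1/2:ℝ) * (Sq volume (d1 u)) ^ (1/2:ℝ)) := by
    have h1 : (∫⁻ y, M y) = ∫⁻ z : ℝ × ℝ, 2 * ((‖u z‖₊ : ℝ≥0∞) * ‖d1 u z‖₊) :=
      (lint_prod2_symm (measurable_const.mul (mu.mul mu1))).symm
    erw [h1, lintegral_const_mul _ (mu.mul mu1)]
    exact mul_le_mul_right (lint_CS volume mu.aemeasurable mu1.aemeasurable) _
  -- step 7
  have step7 : (∫⁻ y, Cc y ^ 2) = Sq volume c := by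
    have : ∀ y, Cc y ^ 2 = ∫⁻ x, (‖c (x,y)‖₊ : ℝ≥0∞) ^ 2 := fun y => rpow_half_sq _
    rw [lintegral_congr this]
    exact (lint_prod2_symm (mc.pow_const 2)).symm
  -- assemble
  calc (∫⁻ z : ℝ × ℝ, (‖u z‖₊ : ℝ≥0∞) * ‖a z‖₊ * ‖c z‖₊)
      = ∫⁻ y, ∫⁻ x, (‖u (x,y)‖₊ : ℝ≥0∞) * ‖a (x,y)‖₊ * ‖c (x,y)‖₊ := step1
    _ ≤ ∫⁻ y, M y ^ (1/2:ℝ) * (A y * Cc y) := lintegral_mono_ae step2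
    _ ≤ Abar * ((∫⁻ y, M y) ^ (1/2:ℝ) * (∫⁻ y, Cc y ^ 2) ^ (1/2:ℝ)) := step45
    _ ≤ Abar * ((2 * ((Sq volume u) ^ (1/2:ℝ) * (Sq volume (d1 u)) ^ (1/2:ℝ))) ^ (1/2:ℝ)
          * (Sq volume c) ^ (1/2:ℝ)) := by
        rw [step7]
        exact mul_le_mul_right (mul_le_mul_left
          (ENNReal.rpow_le_rpow step6 (by norm_num)) _) _
    _ = 2 * (Sq volume u) ^ (1/4:ℝ) * (Sq volume (d1 u)) ^ (1/4:ℝ)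
          * (Sq volume a) ^ (1/4:ℝ) * (Sq volume (d2 a)) ^ (1/4:ℝ)
          * (Sq volume c) ^ (1/2:ℝ) := by
        rw [hAbar]
        rw [ENNReal.mul_rpow_of_nonneg _ _ (by norm_num : (0:ℝ) ≤ 1/2),
            ENNReal.mul_rpow_of_nonneg _ _ (by norm_num : (0:ℝ) ≤ 1/2),
            ENNReal.mul_rpow_of_nonneg (2:ℝ≥0∞) _ (by norm_num : (0:ℝ) ≤ 1/2),
            ENNReal.mul_rpow_of_nonneg _ _ (by norm_num : (0:ℝ) ≤ 1/2)]
        simp only [rpow_quarter]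
        calc (2:ℝ≥0∞) ^ (1/2:ℝ) * ((Sq volume a) ^ (1/4:ℝ) * (Sq volume (d2 a)) ^ (1/4:ℝ))
              * ((2:ℝ≥0∞) ^ (1/2:ℝ) * ((Sq volume u) ^ (1/4:ℝ) * (Sq volume (d1 u)) ^ (1/4:ℝ))
                * (Sq volume c) ^ (1/2:ℝ))
            = ((2:ℝ≥0∞) ^ (1/2:ℝ) * (2:ℝ≥0∞) ^ (1/2:ℝ)) * (Sq volume u) ^ (1/4:ℝ)
              * (Sq volume (d1 u)) ^ (1/4:ℝ) * (Sq volume a) ^ (1/4:ℝ)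
              * (Sq volume (d2 a)) ^ (1/4:ℝ) * (Sq volume c) ^ (1/2:ℝ) := by ring
          _ = _ := by rw [sqrt2_mul_sqrt2]

end SecE
section SecF

lemma taylorF {F : ℝ × ℝ → ℝ} (hF : ContDiff ℝ (⊤:ℕ∞) F) (hF0 : F 0 = 0)
    (hF1 : fderiv ℝ F 0 = 0) :
    ∃ M : ℝ, 0 < M ∧ (∀ p : ℝ × ℝ, ‖p‖ ≤ 4 → ‖fderiv ℝ F p‖ ≤ M * ‖p‖)
      ∧ (∀ p : ℝ × ℝ, ‖p‖ ≤ 4 → |F p| ≤ M * ‖p‖) := by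
  have hGsm : ContDiff ℝ (⊤:ℕ∞) (fderiv ℝ F) := hF.fderiv_right inf_succ_le
  have hG2c : Continuous (fderiv ℝ (fderiv ℝ F)) :=
    (hGsm.fderiv_right inf_succ_le).continuous
  obtain ⟨C, hC⟩ := (isCompact_closedBall (0 : ℝ × ℝ) 4).exists_bound_of_continuousOn
    (f := fderiv ℝ (fderiv ℝ F)) hG2c.continuousOn
  set M₀ := max C 0 + 1 with hM₀
  have hM₀pos : 0 < M₀ := by positivity
  have hball : Convex ℝ (Metric.closedBall (0 : ℝ × ℝ) 4) := convex_closedBall _ _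
  have hGd : ∀ x ∈ Metric.closedBall (0 : ℝ × ℝ) 4, DifferentiableAt ℝ (fderiv ℝ F) x :=
    fun x _ => (hGsm.differentiable (by simp)).differentiableAt
  have hGb : ∀ x ∈ Metric.closedBall (0 : ℝ × ℝ) 4, ‖fderiv ℝ (fderiv ℝ F) x‖ ≤ M₀ :=
    fun x hx => le_trans (hC x hx) (by simp [hM₀]; nlinarith [le_max_left C (0:ℝ)])
  have hGlip : ∀ p : ℝ × ℝ, ‖p‖ ≤ 4 → ‖fderiv ℝ F p‖ ≤ M₀ * ‖p‖ := by
    intro p hp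
    have hmem : p ∈ Metric.closedBall (0 : ℝ × ℝ) 4 := by
      simpa [Metric.mem_closedBall, dist_zero_right] using hp
    have h0m : (0 : ℝ × ℝ) ∈ Metric.closedBall (0 : ℝ × ℝ) 4 :=
      Metric.mem_closedBall_self (by norm_num)
    have := hball.norm_image_sub_le_of_norm_fderiv_le hGd hGb h0m hmem
    simpa [hF1] using this
  have hFd : ∀ x ∈ Metric.closedBall (0 : ℝ × ℝ) 4, DifferentiableAt ℝ F x :=
    fun x _ => (hF.differentiable (by simp)).differentiableAt
  have hFb : ∀ x ∈ Metric.closedBall (0 : ℝ × ℝ) 4, ‖fderiv ℝ F x‖ ≤ 4 * M₀ := by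
    intro x hx
    have hx4 : ‖x‖ ≤ 4 := by simpa [Metric.mem_closedBall, dist_zero_right] using hx
    calc ‖fderiv ℝ F x‖ ≤ M₀ * ‖x‖ := hGlip x hx4
      _ ≤ M₀ * 4 := by nlinarith
      _ = 4 * M₀ := by ring
  refine ⟨4 * M₀ + 1, by positivity, ?_, ?_⟩
  · intro p hp
    calc ‖fderiv ℝ F p‖ ≤ M₀ * ‖p‖ := hGlip p hp
      _ ≤ (4 * M₀ + 1) * ‖p‖ := by nlinarith [norm_nonneg p]
  · intro p hp
    have hmem : p ∈ Metric.closedBall (0 : ℝ × ℝ) 4 := by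
      simpa [Metric.mem_closedBall, dist_zero_right] using hp
    have h0m : (0 : ℝ × ℝ) ∈ Metric.closedBall (0 : ℝ × ℝ) 4 :=
      Metric.mem_closedBall_self (by norm_num)
    have := hball.norm_image_sub_le_of_norm_fderiv_le hFd hFb h0m hmem
    rw [hF0] at this
    simp only [sub_zero] at this
    calc |F p| ≤ 4 * M₀ * ‖p‖ := by simpa [Real.norm_eq_abs] using this
      _ ≤ (4 * M₀ + 1) * ‖p‖ := by nlinarith [norm_nonneg p]

lemma slice_meas' {f : ℝ × ℝ → ℝ} (hf : Continuous f) (x : ℝ) :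
    Measurable fun y => (‖f (x, y)‖₊ : ℝ≥0∞) :=
  ((hf.comp (continuous_const.prodMk continuous_id)).measurable).nnnorm.coe_nnreal_ennreal

lemma rpow_half_le_one {x : ℝ≥0∞} (h : x ≤ 1) : x ^ (1/2:ℝ) ≤ 1 := by
  calc x ^ (1/2:ℝ) ≤ 1 ^ (1/2:ℝ) := ENNReal.rpow_le_rpow h (by norm_num)
    _ = 1 := ENNReal.one_rpow _

lemma Kbound {r : ℝ × ℝ → ℝ} (hr : ContDiff ℝ (⊤:ℕ∞) r)
    (h0 : Sq volume r ≤ 1) (h1 : Sq volume (d1 r) ≤ 1)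
    (h2 : Sq volume (d2 r) ≤ 1) (h12 : Sq volume (d1 (d2 r)) ≤ 1) :
    ∀ᵐ x : ℝ, ∀ y : ℝ, |r (x, y)| ≤ 2 := by
  have hrc := hr.continuous
  have hd2c := (contDiff_d2 hr).continuous
  have mr : Measurable fun z : ℝ × ℝ => (‖r z‖₊ : ℝ≥0∞) ^ 2 :=
    (hrc.measurable.nnnorm.coe_nnreal_ennreal).pow_const 2
  have mr2 : Measurable fun z : ℝ × ℝ => (‖d2 r z‖₊ : ℝ≥0∞) ^ 2 :=
    (hd2c.measurable.nnnorm.coe_nnreal_ennreal).pow_const 2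
  have hfin1 : ∀ᵐ x : ℝ, (∫⁻ y, (‖r (x, y)‖₊ : ℝ≥0∞) ^ 2) ≠ ⊤ :=
    ae_slice_fin_x mr (by exact ne_top_of_le_ne_top ENNReal.one_ne_top h0)
  have hfin2 : ∀ᵐ x : ℝ, (∫⁻ y, (‖d2 r (x, y)‖₊ : ℝ≥0∞) ^ 2) ≠ ⊤ :=
    ae_slice_fin_x mr2 (by exact ne_top_of_le_ne_top ENNReal.one_ne_top h2)
  filter_upwards [hfin1, hfin2] with x hx1 hx2
  intro y
  -- pointwise bound via ptbound + CS + supslice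
  have hw : ContDiff ℝ (⊤:ℕ∞) (fun y => r (x, y)) := contDiff_slice2 hr x
  have hp := ptbound hw hx1 y
  simp only [deriv_slice2] at hp
  have hCS : (∫⁻ t, 2 * ((‖r (x, t)‖₊ : ℝ≥0∞) * ‖d2 r (x, t)‖₊))
      ≤ 2 * ((∫⁻ t, (‖r (x, t)‖₊ : ℝ≥0∞) ^ 2) ^ (1/2:ℝ)
          * (∫⁻ t, (‖d2 r (x, t)‖₊ : ℝ≥0∞) ^ 2) ^ (1/2:ℝ)) := by
    erw [lintegral_const_mul _ ((slice_meas' hrc x).mul (slice_meas' hd2c x))]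
    exact mul_le_mul_right (lint_CS volume (slice_meas' hrc x).aemeasurable
      (slice_meas' hd2c x).aemeasurable) _
  have hs1 : (∫⁻ t, (‖r (x, t)‖₊ : ℝ≥0∞) ^ 2) ≤ 2 := by
    calc (∫⁻ t, (‖r (x, t)‖₊ : ℝ≥0∞) ^ 2)
        ≤ 2 * ((Sq volume r) ^ (1/2:ℝ) * (Sq volume (d1 r)) ^ (1/2:ℝ)) :=
          supslice hr (ne_top_of_le_ne_top ENNReal.one_ne_top h0)
            (ne_top_of_le_ne_top ENNReal.one_ne_top h1) x
      _ ≤ 2 * (1 * 1) :=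
          mul_le_mul_right (mul_le_mul' (rpow_half_le_one h0) (rpow_half_le_one h1)) 2
      _ = 2 := by norm_num
  have hs2 : (∫⁻ t, (‖d2 r (x, t)‖₊ : ℝ≥0∞) ^ 2) ≤ 2 := by
    calc (∫⁻ t, (‖d2 r (x, t)‖₊ : ℝ≥0∞) ^ 2)
        ≤ 2 * ((Sq volume (d2 r)) ^ (1/2:ℝ) * (Sq volume (d1 (d2 r))) ^ (1/2:ℝ)) :=
          supslice (contDiff_d2 hr) (ne_top_of_le_ne_top ENNReal.one_ne_top h2)
            (ne_top_of_le_ne_top ENNReal.one_ne_top h12) x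
      _ ≤ 2 * (1 * 1) :=
          mul_le_mul_right (mul_le_mul' (rpow_half_le_one h2) (rpow_half_le_one h12)) 2
      _ = 2 := by norm_num
  have hfour : (‖r (x, y)‖₊ : ℝ≥0∞) ^ 2 ≤ 4 := by
    calc (‖r (x, y)‖₊ : ℝ≥0∞) ^ 2
        ≤ ∫⁻ t, 2 * ((‖r (x, t)‖₊ : ℝ≥0∞) * ‖d2 r (x, t)‖₊) := hp
      _ ≤ 2 * ((∫⁻ t, (‖r (x, t)‖₊ : ℝ≥0∞) ^ 2) ^ (1/2:ℝ)
          * (∫⁻ t, (‖d2 r (x, t)‖₊ : ℝ≥0∞) ^ 2) ^ (1/2:ℝ)) := hCS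
      _ ≤ 2 * ((2:ℝ≥0∞) ^ (1/2:ℝ) * (2:ℝ≥0∞) ^ (1/2:ℝ)) :=
          mul_le_mul_right (mul_le_mul'
            (ENNReal.rpow_le_rpow hs1 (by norm_num : (0:ℝ) ≤ 1/2))
            (ENNReal.rpow_le_rpow hs2 (by norm_num : (0:ℝ) ≤ 1/2))) 2
      _ = 2 * 2 := by rw [sqrt2_mul_sqrt2]
      _ = 4 := by norm_num
  have hsq : r (x, y) ^ 2 ≤ 4 := by
    rw [enn_sq] at hfour
    have h4 : (4:ℝ≥0∞) = ENNReal.ofReal 4 := by norm_num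
    rw [h4] at hfour
    exact (ENNReal.ofReal_le_ofReal_iff (by norm_num)).1 hfour
  nlinarith [sq_abs (r (x, y)), abs_nonneg (r (x, y))]

end SecF
section SecG

lemma L2mul {α : Type*} [MeasurableSpace α] {μ : Measure α} {v w : α → ℝ}
    (hv : AEStronglyMeasurable v μ) (hw : AEStronglyMeasurable w μ)
    (h1 : (∫⁻ y, (‖v y‖₊ : ℝ≥0∞) ^ 2 ∂μ) ≠ ⊤) (h2 : (∫⁻ y, (‖w y‖₊ : ℝ≥0∞) ^ 2 ∂μ) ≠ ⊤) :
    Integrable (fun y => v y * w y) μ := by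
  refine ⟨hv.mul hw, ?_⟩
  rw [HasFiniteIntegral]
  calc ∫⁻ y, (‖v y * w y‖₊ : ℝ≥0∞) ∂μ
      = ∫⁻ y, (‖v y‖₊ : ℝ≥0∞) * ‖w y‖₊ ∂μ := lintegral_congr fun y => enn_mul _ _
    _ ≤ (∫⁻ y, (‖v y‖₊ : ℝ≥0∞) ^ 2 ∂μ) ^ (1/2:ℝ) * (∫⁻ y, (‖w y‖₊ : ℝ≥0∞) ^ 2 ∂μ) ^ (1/2:ℝ) :=
        lint_CS μ hv.aemeasurable.nnnorm.coe_nnreal_ennreal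
          hw.aemeasurable.nnnorm.coe_nnreal_ennreal
    _ < ⊤ := ENNReal.mul_lt_top (ENNReal.rpow_lt_top_of_nonneg (by norm_num) h1)
        (ENNReal.rpow_lt_top_of_nonneg (by norm_num) h2)

lemma BP1D {w φ : ℝ → ℝ} (hw : Differentiable ℝ w)
    (hφ : Differentiable ℝ φ) (hwφc : Continuous fun y => deriv w y * φ y + w y * deriv φ y)
    (hi1 : Integrable (fun y => w y * φ y))
    (hi2 : Integrable (fun y => deriv w y * φ y))
    (hi3 : Integrable (fun y => w y * deriv φ y)) :
    ∫ y, deriv w y * φ y = -∫ y, w y * deriv φ y := by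
  set h : ℝ → ℝ := fun y => w y * φ y with hh
  have hder : ∀ y, HasDerivAt h (deriv w y * φ y + w y * deriv φ y) y :=
    fun y => ((hw y).hasDerivAt.mul (hφ y).hasDerivAt)
  have hint : Integrable (fun y => deriv w y * φ y + w y * deriv φ y) := hi2.add hi3
  have hex : ∀ n : ℕ, ∃ b, (n:ℝ) < b ∧ |h b| < 1/((n:ℝ)+1) :=
    fun n => exists_small_above hi1 (by positivity) _
  have hex' : ∀ n : ℕ, ∃ a, a < -(n:ℝ) ∧ |h a| < 1/((n:ℝ)+1) :=
    fun n => exists_small_below hi1 (by positivity) _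
  choose b hb hbs using hex
  choose a ha has using hex'
  have hbt : Filter.Tendsto b Filter.atTop Filter.atTop :=
    Filter.tendsto_atTop_mono (fun n => (hb n).le) tendsto_natCast_atTop_atTop
  have hat : Filter.Tendsto a Filter.atTop Filter.atBot := by
    refine Filter.tendsto_atBot_mono (fun n => (ha n).le) ?_
    exact Filter.tendsto_neg_atBot_iff.mpr tendsto_natCast_atTop_atTop
  have hI := MeasureTheory.intervalIntegral_tendsto_integral hint hat hbt
  have heq : ∀ n, (∫ y in a n..b n, (deriv w y * φ y + w y * deriv φ y))
      = h (b n) - h (a n) := fun n =>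
    intervalIntegral.integral_eq_sub_of_hasDerivAt (fun t _ => hder t)
      (hwφc.intervalIntegrable _ _)
  have hlim1 : Filter.Tendsto (fun n => h (b n)) Filter.atTop (nhds 0) :=
    squeeze_zero_norm (fun n => (hbs n).le) tendsto_one_div_add_atTop_nhds_zero_nat
  have hlim2 : Filter.Tendsto (fun n => h (a n)) Filter.atTop (nhds 0) :=
    squeeze_zero_norm (fun n => (has n).le) tendsto_one_div_add_atTop_nhds_zero_nat
  have hlim0 : Filter.Tendsto (fun n => h (b n) - h (a n)) Filter.atTop (nhds 0) := by
    simpa using hlim1.sub hlim2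
  have hzero : (∫ y, (deriv w y * φ y + w y * deriv φ y)) = 0 := by
    refine tendsto_nhds_unique ?_ hlim0
    simpa only [heq] using hI
  rw [integral_add hi2 hi3] at hzero
  linarith

end SecG
section SecH

lemma ae_prod_of_ae_slices {P : ℝ × ℝ → Prop} (h : ∀ᵐ x : ℝ, ∀ y : ℝ, P (x, y)) :
    ∀ᵐ z : ℝ × ℝ, P z := by
  rw [ae_iff] at h ⊢
  have hsub : {z : ℝ × ℝ | ¬ P z} ⊆ {x : ℝ | ¬ ∀ y : ℝ, P (x, y)} ×ˢ (Set.univ : Set ℝ) := by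
    intro z hz
    refine ⟨fun hall => hz ?_, Set.mem_univ _⟩
    simpa using hall z.2
  have hz : ((volume : Measure ℝ).prod volume)
      ({x : ℝ | ¬ ∀ y : ℝ, P (x, y)} ×ˢ (Set.univ : Set ℝ)) = 0 := by
    rw [MeasureTheory.Measure.prod_prod, h, zero_mul]
  exact measure_mono_null hsub hz

lemma prod_norm_le_sum (a b : ℝ) : ‖((a, b) : ℝ × ℝ)‖ ≤ |a| + |b| := by
  rw [Prod.norm_def]
  simp only [Real.norm_eq_abs]
  exact max_le (le_add_of_nonneg_right (abs_nonneg b)) (le_add_of_nonneg_left (abs_nonneg a))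

lemma Fb {F : ℝ × ℝ → ℝ} {M : ℝ} (hM : 0 < M)
    (hM2 : ∀ p : ℝ × ℝ, ‖p‖ ≤ 4 → |F p| ≤ M * ‖p‖)
    {a b : ℝ} (ha : |a| ≤ 2) (hb : |b| ≤ 2) :
    |F (a, b)| ≤ M * (|a| + |b|) := by
  have hs := prod_norm_le_sum a b
  have h4 : ‖((a, b) : ℝ × ℝ)‖ ≤ 4 := by linarith
  have := hM2 _ h4
  nlinarith

lemma Gb {F : ℝ × ℝ → ℝ} {M : ℝ} (hM : 0 < M)
    (hM1 : ∀ p : ℝ × ℝ, ‖p‖ ≤ 4 → ‖fderiv ℝ F p‖ ≤ M * ‖p‖)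
    {a b : ℝ} (ha : |a| ≤ 2) (hb : |b| ≤ 2) (v₁ v₂ : ℝ) :
    |(fderiv ℝ F (a, b)) (v₁, v₂)| ≤ M * ((|a| + |b|) * (|v₁| + |v₂|)) := by
  have hs := prod_norm_le_sum a b
  have h4 : ‖((a, b) : ℝ × ℝ)‖ ≤ 4 := by linarith
  have h1 := (fderiv ℝ F (a, b)).le_opNorm ((v₁, v₂) : ℝ × ℝ)
  have h2 := hM1 _ h4
  have h3 := prod_norm_le_sum v₁ v₂
  have hn : |(fderiv ℝ F (a, b)) (v₁, v₂)| = ‖(fderiv ℝ F (a, b)) ((v₁, v₂) : ℝ × ℝ)‖ :=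
    (Real.norm_eq_abs _).symm
  rw [hn]
  calc ‖(fderiv ℝ F (a, b)) ((v₁, v₂) : ℝ × ℝ)‖
      ≤ ‖fderiv ℝ F (a, b)‖ * ‖((v₁, v₂) : ℝ × ℝ)‖ := h1
    _ ≤ (M * ‖((a, b) : ℝ × ℝ)‖) * ‖((v₁, v₂) : ℝ × ℝ)‖ :=
        mul_le_mul_of_nonneg_right h2 (norm_nonneg _)
    _ ≤ (M * (|a| + |b|)) * ‖((v₁, v₂) : ℝ × ℝ)‖ := by
        refine mul_le_mul_of_nonneg_right ?_ (norm_nonneg _)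
        nlinarith
    _ ≤ (M * (|a| + |b|)) * (|v₁| + |v₂|) := by
        refine mul_le_mul_of_nonneg_left h3 ?_
        have := abs_nonneg a; have := abs_nonneg b
        positivity
    _ = M * ((|a| + |b|) * (|v₁| + |v₂|)) := by ring

lemma int_mono_abs {α : Type*} [MeasurableSpace α] {μ : Measure α}
    {f g₁ g₂ : α → ℝ} (c : ℝ) (hf : AEStronglyMeasurable f μ)
    (h1 : Integrable g₁ μ) (h2 : Integrable g₂ μ)
    (hb : ∀ᵐ y ∂μ, |f y| ≤ c * (|g₁ y| + |g₂ y|)) : Integrable f μ := by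
  refine Integrable.mono' ((h1.abs.add h2.abs).const_mul c) hf ?_
  filter_upwards [hb] with y hy
  simpa [Real.norm_eq_abs] using hy

lemma BP2D {F u r s : ℝ × ℝ → ℝ} {M : ℝ} (hM : 0 < M)
    (hF : ContDiff ℝ (⊤:ℕ∞) F)
    (hM1 : ∀ p : ℝ × ℝ, ‖p‖ ≤ 4 → ‖fderiv ℝ F p‖ ≤ M * ‖p‖)
    (hM2 : ∀ p : ℝ × ℝ, ‖p‖ ≤ 4 → |F p| ≤ M * ‖p‖)
    (hu : ContDiff ℝ (⊤:ℕ∞) u) (hr : ContDiff ℝ (⊤:ℕ∞) r) (hs : ContDiff ℝ (⊤:ℕ∞) s)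
    (hSu : Sq volume u ≠ ⊤) (hSu2 : Sq volume (d2 u) ≠ ⊤)
    (hSr : Sq volume r ≠ ⊤) (hSr2 : Sq volume (d2 r) ≠ ⊤)
    (hSs : Sq volume s ≠ ⊤) (hSs2 : Sq volume (d2 s) ≠ ⊤)
    (hKr : ∀ᵐ x : ℝ, ∀ y : ℝ, |r (x, y)| ≤ 2)
    (hKs : ∀ᵐ x : ℝ, ∀ y : ℝ, |s (x, y)| ≤ 2) :
    (∫ z : ℝ × ℝ, d2 u z * F (r z, s z))
      = -∫ z : ℝ × ℝ, u z * (fderiv ℝ F (r z, s z)) (d2 r z, d2 s z) := by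
  set Φ : ℝ × ℝ → ℝ := fun z => F (r z, s z) with hΦ
  set G : ℝ × ℝ → ℝ := fun z => (fderiv ℝ F (r z, s z)) (d2 r z, d2 s z) with hG
  have huc := hu.continuous
  have hrc := hr.continuous
  have hsc := hs.continuous
  have hu2c := (contDiff_d2 hu).continuous
  have hr2c := (contDiff_d2 hr).continuous
  have hs2c := (contDiff_d2 hs).continuous
  have hΦc : Continuous Φ := hF.continuous.comp (hrc.prodMk hsc)
  have hGc : Continuous G :=
    (((hF.fderiv_right inf_succ_le).continuous.comp (hrc.prodMk hsc)).clm_apply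
      (hr2c.prodMk hs2c))
  have hK2 : ∀ᵐ z : ℝ × ℝ, |r z| ≤ 2 ∧ |s z| ≤ 2 := by
    refine ae_prod_of_ae_slices (P := fun z => |r z| ≤ 2 ∧ |s z| ≤ 2) ?_
    filter_upwards [hKr, hKs] with x h1 h2
    exact fun y => ⟨h1 y, h2 y⟩
  -- 2D integrability of the two integrands
  have hInta : Integrable (fun z : ℝ × ℝ => d2 u z * Φ z) := by
    have hmaj : Integrable (fun z : ℝ × ℝ =>
        M * (|d2 u z * r z| + |d2 u z * s z|)) :=
      (((L2mul hu2c.aestronglyMeasurable hrc.aestronglyMeasurable hSu2 hSr).abs.add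
        (L2mul hu2c.aestronglyMeasurable hsc.aestronglyMeasurable hSu2 hSs).abs)).const_mul M
    refine Integrable.mono' hmaj (hu2c.mul hΦc).aestronglyMeasurable ?_
    filter_upwards [hK2] with z hz
    rw [Real.norm_eq_abs, abs_mul]
    have hFb := Fb hM hM2 hz.1 hz.2
    have h1 : |d2 u z| * |Φ z| ≤ |d2 u z| * (M * (|r z| + |s z|)) :=
      mul_le_mul_of_nonneg_left hFb (abs_nonneg _)
    calc |d2 u z| * |Φ z| ≤ |d2 u z| * (M * (|r z| + |s z|)) := h1
      _ = M * (|d2 u z| * |r z| + |d2 u z| * |s z|) := by ring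
      _ = M * (|d2 u z * r z| + |d2 u z * s z|) := by rw [abs_mul, abs_mul]
  have hIntb : Integrable (fun z : ℝ × ℝ => u z * G z) := by
    have hmaj : Integrable (fun z : ℝ × ℝ =>
        (4 * M) * (|u z * d2 r z| + |u z * d2 s z|)) :=
      (((L2mul huc.aestronglyMeasurable hr2c.aestronglyMeasurable hSu hSr2).abs.add
        (L2mul huc.aestronglyMeasurable hs2c.aestronglyMeasurable hSu hSs2).abs)).const_mul _
    refine Integrable.mono' hmaj (huc.mul hGc).aestronglyMeasurable ?_
    filter_upwards [hK2] with z hz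
    rw [Real.norm_eq_abs, abs_mul]
    have hGb := Gb hM hM1 hz.1 hz.2 (d2 r z) (d2 s z)
    have habs : |G z| ≤ M * ((|r z| + |s z|) * (|d2 r z| + |d2 s z|)) := hGb
    have h4 : |r z| + |s z| ≤ 4 := by have := hz.1; have := hz.2; linarith
    have hd : (0:ℝ) ≤ |d2 r z| + |d2 s z| := by positivity
    have h2 : |G z| ≤ (4 * M) * (|d2 r z| + |d2 s z|) := by
      nlinarith [mul_le_mul_of_nonneg_left (mul_le_mul_of_nonneg_right h4 hd) hM.le]
    calc |u z| * |G z| ≤ |u z| * ((4 * M) * (|d2 r z| + |d2 s z|)) :=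
          mul_le_mul_of_nonneg_left h2 (abs_nonneg _)
      _ = (4 * M) * (|u z| * |d2 r z| + |u z| * |d2 s z|) := by ring
      _ = (4 * M) * (|u z * d2 r z| + |u z * d2 s z|) := by rw [abs_mul, abs_mul]
  -- slice goodness
  have hg1 := ae_slice_fin_x ((huc.measurable.nnnorm.coe_nnreal_ennreal).pow_const 2) hSu
  have hg2 := ae_slice_fin_x ((hu2c.measurable.nnnorm.coe_nnreal_ennreal).pow_const 2) hSu2
  have hg3 := ae_slice_fin_x ((hrc.measurable.nnnorm.coe_nnreal_ennreal).pow_const 2) hSr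
  have hg4 := ae_slice_fin_x ((hr2c.measurable.nnnorm.coe_nnreal_ennreal).pow_const 2) hSr2
  have hg5 := ae_slice_fin_x ((hsc.measurable.nnnorm.coe_nnreal_ennreal).pow_const 2) hSs
  have hg6 := ae_slice_fin_x ((hs2c.measurable.nnnorm.coe_nnreal_ennreal).pow_const 2) hSs2
  have hslice : ∀ᵐ x : ℝ, (∫ y, d2 u (x, y) * Φ (x, y)) = -∫ y, u (x, y) * G (x, y) := by
    filter_upwards [hg1, hg2, hg3, hg4, hg5, hg6, hKr, hKs]
      with x hx1 hx2 hx3 hx4 hx5 hx6 hkr hks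
    set w : ℝ → ℝ := fun y => u (x, y) with hw
    set φ : ℝ → ℝ := fun y => F (r (x, y), s (x, y)) with hφ
    have hwdiff : Differentiable ℝ w := (contDiff_slice2 hu x).differentiable (by simp)
    have hrd : ∀ y, HasDerivAt (fun y => r (x, y)) (d2 r (x, y)) y := by
      intro y
      have h := (((contDiff_slice2 hr x).differentiable (by simp)) y).hasDerivAt
      rwa [show deriv (fun y => r (x, y)) y = d2 r (x, y) from
        congrFun (deriv_slice2 r x) y] at h
    have hsd : ∀ y, HasDerivAt (fun y => s (x, y)) (d2 s (x, y)) y := by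
      intro y
      have h := (((contDiff_slice2 hs x).differentiable (by simp)) y).hasDerivAt
      rwa [show deriv (fun y => s (x, y)) y = d2 s (x, y) from
        congrFun (deriv_slice2 s x) y] at h
    have hφder : ∀ y, HasDerivAt φ (G (x, y)) y := by
      intro y
      have hFd : HasFDerivAt F (fderiv ℝ F (r (x, y), s (x, y))) (r (x, y), s (x, y)) :=
        ((hF.differentiable (by simp)) _).hasFDerivAt
      exact hFd.comp_hasDerivAt y ((hrd y).prodMk (hsd y))
    have hφdiff : Differentiable ℝ φ := fun y => (hφder y).differentiableAt
    have hφderiv_eq : deriv φ = fun y => G (x, y) := funext fun y => (hφder y).deriv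
    have hwderiv_eq : deriv w = fun y => d2 u (x, y) := deriv_slice2 u x
    -- slice integrabilities
    have hL2 : ∀ (g h : ℝ × ℝ → ℝ), Continuous g → Continuous h →
        (∫⁻ y, (‖g (x, y)‖₊ : ℝ≥0∞) ^ 2) ≠ ⊤ → (∫⁻ y, (‖h (x, y)‖₊ : ℝ≥0∞) ^ 2) ≠ ⊤ →
        Integrable (fun y => g (x, y) * h (x, y)) := by
      intro g h hg hh h1 h2
      exact L2mul (hg.comp (continuous_const.prodMk continuous_id)).aestronglyMeasurable
        (hh.comp (continuous_const.prodMk continuous_id)).aestronglyMeasurable h1 h2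
    have hφcont : Continuous φ := hΦc.comp (continuous_const.prodMk continuous_id)
    have hwcont : Continuous w := huc.comp (continuous_const.prodMk continuous_id)
    have hKb : ∀ y, |φ y| ≤ M * (|r (x, y)| + |s (x, y)|) :=
      fun y => Fb hM hM2 (hkr y) (hks y)
    have hGcont : Continuous (fun y => G (x, y)) :=
      hGc.comp (continuous_const.prodMk continuous_id)
    have hKG : ∀ y, |G (x, y)| ≤ (4 * M) * (|d2 r (x, y)| + |d2 s (x, y)|) := by
      intro y
      have hGb := Gb hM hM1 (hkr y) (hks y) (d2 r (x, y)) (d2 s (x, y))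
      have h4 : |r (x, y)| + |s (x, y)| ≤ 4 := by have := hkr y; have := hks y; linarith
      have hd : (0:ℝ) ≤ |d2 r (x, y)| + |d2 s (x, y)| := by positivity
      nlinarith [mul_le_mul_of_nonneg_left (mul_le_mul_of_nonneg_right h4 hd) hM.le]
    have hi1 : Integrable (fun y => w y * φ y) := by
      refine int_mono_abs M (hwcont.mul hφcont).aestronglyMeasurable
        (hL2 u r huc hrc hx1 hx3) (hL2 u s huc hsc hx1 hx5) (ae_of_all _ fun y => ?_)
      have hKby := hKb y
      have h0 := abs_nonneg (u (x, y))
      rw [abs_mul, abs_mul, abs_mul]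
      calc |u (x, y)| * |φ y| ≤ |u (x, y)| * (M * (|r (x, y)| + |s (x, y)|)) :=
            mul_le_mul_of_nonneg_left hKby h0
        _ = M * (|u (x, y)| * |r (x, y)| + |u (x, y)| * |s (x, y)|) := by ring
    have hi2 : Integrable (fun y => d2 u (x, y) * φ y) := by
      refine int_mono_abs M ((hu2c.comp (continuous_const.prodMk
          continuous_id)).mul hφcont).aestronglyMeasurable
        (hL2 (d2 u) r hu2c hrc hx2 hx3) (hL2 (d2 u) s hu2c hsc hx2 hx5)
        (ae_of_all _ fun y => ?_)
      have hKby := hKb y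
      have h0 := abs_nonneg (d2 u (x, y))
      rw [abs_mul, abs_mul, abs_mul]
      calc |d2 u (x, y)| * |φ y| ≤ |d2 u (x, y)| * (M * (|r (x, y)| + |s (x, y)|)) :=
            mul_le_mul_of_nonneg_left hKby h0
        _ = M * (|d2 u (x, y)| * |r (x, y)| + |d2 u (x, y)| * |s (x, y)|) := by ring
    have hi3 : Integrable (fun y => w y * G (x, y)) := by
      refine int_mono_abs (4 * M) (hwcont.mul hGcont).aestronglyMeasurable
        (hL2 u (d2 r) huc hr2c hx1 hx4) (hL2 u (d2 s) huc hs2c hx1 hx6)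
        (ae_of_all _ fun y => ?_)
      have h0 := abs_nonneg (u (x, y))
      rw [abs_mul, abs_mul, abs_mul]
      calc |u (x, y)| * |G (x, y)|
          ≤ |u (x, y)| * ((4 * M) * (|d2 r (x, y)| + |d2 s (x, y)|)) :=
            mul_le_mul_of_nonneg_left (hKG y) h0
        _ = (4 * M) * (|u (x, y)| * |d2 r (x, y)| + |u (x, y)| * |d2 s (x, y)|) := by ring
    have hi2' : Integrable (fun y => deriv w y * φ y) := by
      simpa only [hwderiv_eq] using hi2
    have hi3' : Integrable (fun y => w y * deriv φ y) := by
      simpa only [hφderiv_eq] using hi3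
    have hwφc : Continuous fun y => deriv w y * φ y + w y * deriv φ y := by
      rw [hwderiv_eq, hφderiv_eq]
      exact (((hu2c.comp (continuous_const.prodMk continuous_id)).mul hφcont).add
        (hwcont.mul hGcont))
    have hbp := BP1D hwdiff hφdiff hwφc hi1 hi2' hi3'
    simp only [hwderiv_eq, hφderiv_eq] at hbp
    exact hbp
  calc (∫ z : ℝ × ℝ, d2 u z * Φ z)
      = ∫ x, ∫ y, d2 u (x, y) * Φ (x, y) := MeasureTheory.integral_prod _ hInta
    _ = ∫ x, -∫ y, u (x, y) * G (x, y) := integral_congr_ae hslice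
    _ = -∫ x, ∫ y, u (x, y) * G (x, y) := integral_neg _
    _ = -∫ z : ℝ × ℝ, u z * G z := by rw [← MeasureTheory.integral_prod _ hIntb]; rfl

end SecH
section SecI

lemma rpow_half_mul_self (Y : ℝ≥0∞) : Y ^ (1/2:ℝ) * Y = Y ^ (3/2:ℝ) := by
  rcases eq_or_ne Y 0 with h | h
  · rw [h, ENNReal.zero_rpow_of_pos (by norm_num), ENNReal.zero_rpow_of_pos (by norm_num),
      mul_zero]
  rcases eq_or_ne Y ⊤ with h2 | h2
  · rw [h2, ENNReal.top_rpow_of_pos (by norm_num), ENNReal.top_rpow_of_pos (by norm_num),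
      ENNReal.top_mul_top]
  nth_rewrite 2 [← ENNReal.rpow_one Y]
  rw [← ENNReal.rpow_add _ _ h h2]
  norm_num

lemma keylemma {F u r s : ℝ × ℝ → ℝ} {M : ℝ} (hM : 0 < M)
    (hF : ContDiff ℝ (⊤:ℕ∞) F)
    (hM1 : ∀ p : ℝ × ℝ, ‖p‖ ≤ 4 → ‖fderiv ℝ F p‖ ≤ M * ‖p‖)
    (hM2 : ∀ p : ℝ × ℝ, ‖p‖ ≤ 4 → |F p| ≤ M * ‖p‖)
    (hu : ContDiff ℝ (⊤:ℕ∞) u) (hr : ContDiff ℝ (⊤:ℕ∞) r) (hs : ContDiff ℝ (⊤:ℕ∞) s)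
    (hSu : Sq volume u ≠ ⊤) (hSu1 : Sq volume (d1 u) ≠ ⊤) (hSu2 : Sq volume (d2 u) ≠ ⊤)
    (hr0 : Sq volume r ≤ 1) (hr1 : Sq volume (d1 r) ≤ 1) (hr2 : Sq volume (d2 r) ≤ 1)
    (hr12 : Sq volume (d1 (d2 r)) ≤ 1)
    (hs0 : Sq volume s ≤ 1) (hs1 : Sq volume (d1 s) ≤ 1) (hs2 : Sq volume (d2 s) ≤ 1)
    (hs12 : Sq volume (d1 (d2 s)) ≤ 1) :
    ENNReal.ofReal |∫ z : ℝ × ℝ, d2 u z * F (r z, s z)| ≤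
      ENNReal.ofReal (8 * M) * ((Sq volume u) ^ (1/4:ℝ) * (Sq volume (d1 u)) ^ (1/4:ℝ)
        * ((Sq volume r) ^ (1/2:ℝ) + (Sq volume s) ^ (1/2:ℝ)) ^ (1/2:ℝ)
        * ((Sq volume (d2 r)) ^ (1/2:ℝ) + (Sq volume (d2 s)) ^ (1/2:ℝ)) ^ (3/2:ℝ)) := by
  have hfr0 : Sq volume r ≠ ⊤ := ne_top_of_le_ne_top ENNReal.one_ne_top hr0
  have hfr2 : Sq volume (d2 r) ≠ ⊤ := ne_top_of_le_ne_top ENNReal.one_ne_top hr2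
  have hfs0 : Sq volume s ≠ ⊤ := ne_top_of_le_ne_top ENNReal.one_ne_top hs0
  have hfs2 : Sq volume (d2 s) ≠ ⊤ := ne_top_of_le_ne_top ENNReal.one_ne_top hs2
  set X : ℝ≥0∞ := (Sq volume r) ^ (1/2:ℝ) + (Sq volume s) ^ (1/2:ℝ) with hX
  set Y : ℝ≥0∞ := (Sq volume (d2 r)) ^ (1/2:ℝ) + (Sq volume (d2 s)) ^ (1/2:ℝ) with hY
  set T : ℝ≥0∞ := (Sq volume u) ^ (1/4:ℝ) * (Sq volume (d1 u)) ^ (1/4:ℝ)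
      * X ^ (1/2:ℝ) * Y ^ (3/2:ℝ) with hT
  -- generic bound for the four trilinear terms
  have hbound : ∀ (a c : ℝ × ℝ → ℝ), ContDiff ℝ (⊤:ℕ∞) a → ContDiff ℝ (⊤:ℕ∞) c →
      Sq volume a ≠ ⊤ → Sq volume (d2 a) ≠ ⊤ →
      (Sq volume a) ^ (1/2:ℝ) ≤ X → (Sq volume (d2 a)) ^ (1/2:ℝ) ≤ Y →
      (Sq volume (d2 c)) ^ (1/2:ℝ) ≤ Y →
      (∫⁻ z : ℝ × ℝ, (‖u z‖₊ : ℝ≥0∞) * ‖a z‖₊ * ‖d2 c z‖₊) ≤ 2 * T := by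
    intro a c ha hc hfa hfa2 hXa hYa hYc
    refine le_trans (tri hu ha (contDiff_d2 hc).continuous hSu hSu1 hfa hfa2) ?_
    have e1 : (Sq volume a) ^ (1/4:ℝ) ≤ X ^ (1/2:ℝ) := by
      rw [← rpow_quarter]; exact ENNReal.rpow_le_rpow hXa (by norm_num)
    have e2 : (Sq volume (d2 a)) ^ (1/4:ℝ) ≤ Y ^ (1/2:ℝ) := by
      rw [← rpow_quarter]; exact ENNReal.rpow_le_rpow hYa (by norm_num)
    calc 2 * (Sq volume u) ^ (1/4:ℝ) * (Sq volume (d1 u)) ^ (1/4:ℝ)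
          * (Sq volume a) ^ (1/4:ℝ) * (Sq volume (d2 a)) ^ (1/4:ℝ)
          * (Sq volume (d2 c)) ^ (1/2:ℝ)
        ≤ 2 * (Sq volume u) ^ (1/4:ℝ) * (Sq volume (d1 u)) ^ (1/4:ℝ)
          * X ^ (1/2:ℝ) * Y ^ (1/2:ℝ) * Y := by gcongr
      _ = 2 * T := by
          rw [hT, show (2:ℝ≥0∞) * (Sq volume u) ^ (1/4:ℝ) * (Sq volume (d1 u)) ^ (1/4:ℝ)
            * X ^ (1/2:ℝ) * Y ^ (1/2:ℝ) * Y
            = 2 * ((Sq volume u) ^ (1/4:ℝ) * (Sq volume (d1 u)) ^ (1/4:ℝ)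
              * X ^ (1/2:ℝ)) * (Y ^ (1/2:ℝ) * Y) from by ring, rpow_half_mul_self]
          ring
  -- by parts
  have hKr := Kbound hr hr0 hr1 hr2 hr12
  have hKs := Kbound hs hs0 hs1 hs2 hs12
  have hbp := BP2D hM hF hM1 hM2 hu hr hs hSu hSu2 hfr0 hfr2 hfs0 hfs2 hKr hKs
  rw [hbp, abs_neg]
  set G : ℝ × ℝ → ℝ := fun z => (fderiv ℝ F (r z, s z)) (d2 r z, d2 s z) with hG
  have huc := hu.continuous
  have hrc := hr.continuous
  have hsc := hs.continuous
  have hr2c := (contDiff_d2 hr).continuous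
  have hs2c := (contDiff_d2 hs).continuous
  have mu : Measurable fun z : ℝ × ℝ => (‖u z‖₊ : ℝ≥0∞) :=
    huc.measurable.nnnorm.coe_nnreal_ennreal
  have mr : Measurable fun z : ℝ × ℝ => (‖r z‖₊ : ℝ≥0∞) :=
    hrc.measurable.nnnorm.coe_nnreal_ennreal
  have ms : Measurable fun z : ℝ × ℝ => (‖s z‖₊ : ℝ≥0∞) :=
    hsc.measurable.nnnorm.coe_nnreal_ennreal
  have mr2 : Measurable fun z : ℝ × ℝ => (‖d2 r z‖₊ : ℝ≥0∞) :=
    hr2c.measurable.nnnorm.coe_nnreal_ennreal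
  have ms2 : Measurable fun z : ℝ × ℝ => (‖d2 s z‖₊ : ℝ≥0∞) :=
    hs2c.measurable.nnnorm.coe_nnreal_ennreal
  have h1 : ENNReal.ofReal |∫ z : ℝ × ℝ, u z * G z| ≤ ∫⁻ z : ℝ × ℝ, (‖u z * G z‖₊ : ℝ≥0∞) :=
    le_trans (le_of_eq (enn_of_abs _).symm)
      (MeasureTheory.enorm_integral_le_lintegral_enorm _)
  have hK2 : ∀ᵐ z : ℝ × ℝ, |r z| ≤ 2 ∧ |s z| ≤ 2 := by
    refine ae_prod_of_ae_slices (P := fun z => |r z| ≤ 2 ∧ |s z| ≤ 2) ?_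
    filter_upwards [hKr, hKs] with x hx1 hx2
    exact fun y => ⟨hx1 y, hx2 y⟩
  have hpt : ∀ᵐ z : ℝ × ℝ, (‖u z * G z‖₊ : ℝ≥0∞) ≤
      ENNReal.ofReal M * ((‖u z‖₊ : ℝ≥0∞) *
        (((‖r z‖₊ : ℝ≥0∞) + ‖s z‖₊) * ((‖d2 r z‖₊ : ℝ≥0∞) + ‖d2 s z‖₊))) := by
    filter_upwards [hK2] with z hz
    have hGb := Gb hM hM1 hz.1 hz.2 (d2 r z) (d2 s z)
    have hb : |u z * G z| ≤ M * (|u z| * ((|r z| + |s z|) * (|d2 r z| + |d2 s z|))) := by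
      rw [abs_mul]
      calc |u z| * |G z|
          ≤ |u z| * (M * ((|r z| + |s z|) * (|d2 r z| + |d2 s z|))) :=
            mul_le_mul_of_nonneg_left hGb (abs_nonneg _)
        _ = M * (|u z| * ((|r z| + |s z|) * (|d2 r z| + |d2 s z|))) := by ring
    calc (‖u z * G z‖₊ : ℝ≥0∞) = ENNReal.ofReal |u z * G z| := enn_of_abs _
      _ ≤ ENNReal.ofReal (M * (|u z| * ((|r z| + |s z|) * (|d2 r z| + |d2 s z|)))) :=
          ENNReal.ofReal_le_ofReal hb
      _ = ENNReal.ofReal M * ((‖u z‖₊ : ℝ≥0∞) *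
          (((‖r z‖₊ : ℝ≥0∞) + ‖s z‖₊) * ((‖d2 r z‖₊ : ℝ≥0∞) + ‖d2 s z‖₊))) := by
          rw [ENNReal.ofReal_mul hM.le, ENNReal.ofReal_mul (abs_nonneg (u z)),
            ENNReal.ofReal_mul (by positivity : (0:ℝ) ≤ |r z| + |s z|),
            ENNReal.ofReal_add (abs_nonneg _) (abs_nonneg _),
            ENNReal.ofReal_add (abs_nonneg _) (abs_nonneg _),
            ← enn_of_abs, ← enn_of_abs, ← enn_of_abs, ← enn_of_abs, ← enn_of_abs]
  have hinner : Measurable fun z : ℝ × ℝ => (‖u z‖₊ : ℝ≥0∞) *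
      (((‖r z‖₊ : ℝ≥0∞) + ‖s z‖₊) * ((‖d2 r z‖₊ : ℝ≥0∞) + ‖d2 s z‖₊)) :=
    mu.mul ((mr.add ms).mul (mr2.add ms2))
  have h2 : (∫⁻ z : ℝ × ℝ, (‖u z * G z‖₊ : ℝ≥0∞)) ≤
      ENNReal.ofReal M * ∫⁻ z : ℝ × ℝ, (‖u z‖₊ : ℝ≥0∞) *
        (((‖r z‖₊ : ℝ≥0∞) + ‖s z‖₊) * ((‖d2 r z‖₊ : ℝ≥0∞) + ‖d2 s z‖₊)) := by
    refine le_trans (lintegral_mono_ae hpt) ?_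
    rw [lintegral_const_mul _ hinner]
  have hexp : ∀ z : ℝ × ℝ, (‖u z‖₊ : ℝ≥0∞) *
      (((‖r z‖₊ : ℝ≥0∞) + ‖s z‖₊) * ((‖d2 r z‖₊ : ℝ≥0∞) + ‖d2 s z‖₊))
      = (‖u z‖₊ : ℝ≥0∞) * ‖r z‖₊ * ‖d2 r z‖₊ + (‖u z‖₊ : ℝ≥0∞) * ‖r z‖₊ * ‖d2 s z‖₊
        + ((‖u z‖₊ : ℝ≥0∞) * ‖s z‖₊ * ‖d2 r z‖₊ + (‖u z‖₊ : ℝ≥0∞) * ‖s z‖₊ * ‖d2 s z‖₊) :=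
    fun z => by ring
  have hsplit : (∫⁻ z : ℝ × ℝ, (‖u z‖₊ : ℝ≥0∞) *
      (((‖r z‖₊ : ℝ≥0∞) + ‖s z‖₊) * ((‖d2 r z‖₊ : ℝ≥0∞) + ‖d2 s z‖₊)))
      = (∫⁻ z : ℝ × ℝ, (‖u z‖₊ : ℝ≥0∞) * ‖r z‖₊ * ‖d2 r z‖₊)
        + (∫⁻ z : ℝ × ℝ, (‖u z‖₊ : ℝ≥0∞) * ‖r z‖₊ * ‖d2 s z‖₊)
        + ((∫⁻ z : ℝ × ℝ, (‖u z‖₊ : ℝ≥0∞) * ‖s z‖₊ * ‖d2 r z‖₊)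
          + (∫⁻ z : ℝ × ℝ, (‖u z‖₊ : ℝ≥0∞) * ‖s z‖₊ * ‖d2 s z‖₊)) := by
    erw [lintegral_congr hexp,
      lintegral_add_left ((mu.mul mr).mul mr2 |>.add ((mu.mul mr).mul ms2)),
      lintegral_add_left ((mu.mul mr).mul mr2),
      lintegral_add_left ((mu.mul ms).mul mr2)]
    rfl
  have hXr : (Sq volume r) ^ (1/2:ℝ) ≤ X := le_self_add
  have hXs : (Sq volume s) ^ (1/2:ℝ) ≤ X := le_add_self
  have hYr : (Sq volume (d2 r)) ^ (1/2:ℝ) ≤ Y := le_self_add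
  have hYs : (Sq volume (d2 s)) ^ (1/2:ℝ) ≤ Y := le_add_self
  have hsum : (∫⁻ z : ℝ × ℝ, (‖u z‖₊ : ℝ≥0∞) *
      (((‖r z‖₊ : ℝ≥0∞) + ‖s z‖₊) * ((‖d2 r z‖₊ : ℝ≥0∞) + ‖d2 s z‖₊))) ≤ 8 * T := by
    rw [hsplit]
    have b1 := hbound r r hr hr hfr0 hfr2 hXr hYr hYr
    have b2 := hbound r s hr hs hfr0 hfr2 hXr hYr hYs
    have b3 := hbound s r hs hr hfs0 hfs2 hXs hYs hYr
    have b4 := hbound s s hs hs hfs0 hfs2 hXs hYs hYs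
    calc _ ≤ (2 * T + 2 * T) + (2 * T + 2 * T) :=
          add_le_add (add_le_add b1 b2) (add_le_add b3 b4)
      _ = 8 * T := by ring
  calc ENNReal.ofReal |∫ z : ℝ × ℝ, u z * G z|
      ≤ ∫⁻ z : ℝ × ℝ, (‖u z * G z‖₊ : ℝ≥0∞) := h1
    _ ≤ ENNReal.ofReal M * ∫⁻ z : ℝ × ℝ, (‖u z‖₊ : ℝ≥0∞) *
        (((‖r z‖₊ : ℝ≥0∞) + ‖s z‖₊) * ((‖d2 r z‖₊ : ℝ≥0∞) + ‖d2 s z‖₊)) := h2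
    _ ≤ ENNReal.ofReal M * (8 * T) := mul_le_mul_right hsum _
    _ = ENNReal.ofReal (8 * M) * T := by
        rw [ENNReal.ofReal_mul (by norm_num : (0:ℝ) ≤ 8)]
        rw [show ENNReal.ofReal (8:ℝ) = (8:ℝ≥0∞) from by norm_num]
        ring

end SecI
section SecJ

lemma L2e_eq (g : ℝ × ℝ → ℝ) : L2e g = (Sq volume g) ^ (1/2:ℝ) := by
  rw [L2e, eLpNorm_eq_lintegral_rpow_enorm_toReal (by norm_num) (by norm_num)]
  have h2 : ((2:ℝ≥0∞)).toReal = (2:ℝ) := by norm_num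
  rw [h2]
  unfold Sq
  simp only [rpow_two_eq]
  rfl

lemma L2e_sq (g : ℝ × ℝ → ℝ) : (L2e g) ^ 2 = Sq volume g := by
  rw [L2e_eq, rpow_half_sq]

lemma sq_term_le (g : ℝ × ℝ → ℝ) {k i : ℕ} (hk : k < 4) (hi : i < k + 1) :
    (L2e (d1^[i] (d2^[k - i] g))) ^ 2 ≤ HSqe 3 g := by
  unfold HSqe
  refine le_trans (Finset.single_le_sum
    (f := fun i => (L2e (d1^[i] (d2^[k - i] g))) ^ 2)
    (fun _ _ => zero_le) (Finset.mem_range.2 hi)) ?_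
  exact Finset.single_le_sum
    (f := fun k => ∑ i ∈ Finset.range (k + 1), (L2e (d1^[i] (d2^[k - i] g))) ^ 2)
    (fun _ _ => zero_le) (Finset.mem_range.2 hk)

lemma Sq_comps {g : ℝ × ℝ → ℝ} (h : HSqe 3 g ≤ 1) :
    Sq volume g ≤ 1 ∧ Sq volume (d1 g) ≤ 1 ∧ Sq volume (d2 g) ≤ 1 ∧
      Sq volume (d1 (d2 g)) ≤ 1 := by
  have h00 := sq_term_le g (k := 0) (i := 0) (by norm_num) (by norm_num)
  have h11 := sq_term_le g (k := 1) (i := 1) (by norm_num) (by norm_num)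
  have h10 := sq_term_le g (k := 1) (i := 0) (by norm_num) (by norm_num)
  have h21 := sq_term_le g (k := 2) (i := 1) (by norm_num) (by norm_num)
  simp only [Function.iterate_zero, Function.iterate_one, id_eq] at h00 h11 h10 h21
  rw [L2e_sq] at h00 h11 h10 h21
  exact ⟨le_trans h00 h, le_trans h11 h, le_trans h10 h, le_trans h21 h⟩

end SecJ
section SecK

/-- **Lemma 3.1.** -/
theorem lemma_p2u2 (P : ℝ → ℝ) (hP : IsPressureLaw P)
    (f : ℝ → ℝ → ℝ) (hf : ContDiff ℝ (⊤ : ℕ∞) (Function.uncurry f))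
    (hf00 : f 0 0 = 0)
    (hfr : deriv (fun r => f r 0) 0 = 0)
    (hfs : deriv (fun s => f 0 s) 0 = 0) :
    ∃ C : ℝ, 0 < C ∧
      ∀ (T : ℝ), 0 < T →
        ∀ ρ u1 u2 b1 b2 : ℝ → ℝ × ℝ → ℝ,
          IsMHD P (Icc 0 T) ρ u1 u2 b1 b2 →
          APriori P T ρ u1 u2 b1 b2 →
          ∀ t ∈ Icc (0 : ℝ) T,
            ∀ r s : ℝ × ℝ → ℝ,
              (r = b2 t ∨ r = ρ t) → (s = b2 t ∨ s = ρ t) →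
              |∫ x, d2 (u2 t) x * f (r x) (s x)| ≤
                C * L2R (u2 t) ^ ((1 : ℝ) / 2) * L2R (d1 (u2 t)) ^ ((1 : ℝ) / 2)
                  * (L2R r + L2R s) ^ ((1 : ℝ) / 2)
                  * (L2R (d2 r) + L2R (d2 s)) ^ ((3 : ℝ) / 2) := by
  classical
  set F : ℝ × ℝ → ℝ := Function.uncurry f with hFdef
  have hFsm : ContDiff ℝ (⊤:ℕ∞) F := hf
  have hF0 : F 0 = 0 := hf00
  have hdiffF := hFsm.differentiable (by simp)
  have h10 : fderiv ℝ F ((0:ℝ), (0:ℝ)) ((1:ℝ), (0:ℝ)) = 0 := by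
    have h := (hasDerivAt_slice1 hdiffF 0 0).deriv
    rw [← h]
    exact hfr
  have h01 : fderiv ℝ F ((0:ℝ), (0:ℝ)) ((0:ℝ), (1:ℝ)) = 0 := by
    have h := (hasDerivAt_slice2 hdiffF 0 0).deriv
    rw [← h]
    exact hfs
  have hFd0 : fderiv ℝ F 0 = 0 := by
    refine ContinuousLinearMap.ext fun p => ?_
    have hp : (p : ℝ × ℝ) = p.1 • ((1:ℝ), (0:ℝ)) + p.2 • ((0:ℝ), (1:ℝ)) := by
      ext <;> simp
    have hz : (0 : ℝ × ℝ) = ((0:ℝ), (0:ℝ)) := rfl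
    calc (fderiv ℝ F 0) p
        = (fderiv ℝ F 0) (p.1 • ((1:ℝ), (0:ℝ)) + p.2 • ((0:ℝ), (1:ℝ))) := by rw [← hp]
      _ = p.1 • (fderiv ℝ F 0) ((1:ℝ), (0:ℝ)) + p.2 • (fderiv ℝ F 0) ((0:ℝ), (1:ℝ)) := by
          rw [map_add, ContinuousLinearMap.map_smul, ContinuousLinearMap.map_smul]
      _ = 0 := by rw [hz, h10, h01]; simp
  obtain ⟨M, hMpos, hM1, hM2⟩ := taylorF hFsm hF0 hFd0
  refine ⟨8 * M, by positivity, ?_⟩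
  intro T hT ρ u1 u2 b1 b2 hmhd hap t ht r s hrch hsch
  -- smoothness of time slices
  have hslice_sm : ∀ (g : ℝ → ℝ × ℝ → ℝ), ContDiff ℝ (⊤:ℕ∞) (Function.uncurry g) →
      ContDiff ℝ (⊤:ℕ∞) (g t) := fun g hg =>
    hg.comp (contDiff_const.prodMk contDiff_id)
  have hu2sm : ContDiff ℝ (⊤:ℕ∞) (u2 t) := hslice_sm u2 hmhd.smooth_u2
  have hb2sm : ContDiff ℝ (⊤:ℕ∞) (b2 t) := hslice_sm b2 hmhd.smooth_b2
  have hρsm : ContDiff ℝ (⊤:ℕ∞) (ρ t) := hslice_sm ρ hmhd.smooth_rho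
  have hrsm : ContDiff ℝ (⊤:ℕ∞) r := by
    rcases hrch with h | h <;> (subst h; first | exact hb2sm | exact hρsm)
  have hssm : ContDiff ℝ (⊤:ℕ∞) s := by
    rcases hsch with h | h <;> (subst h; first | exact hb2sm | exact hρsm)
  -- E₀ bounds
  have hE0 := hap.2.2.1 t ht
  have ht' : t ∈ Icc (0:ℝ) t := ⟨ht.1, le_refl t⟩
  have hsup : (HSqe 3 (u1 t) + HSqe 3 (u2 t) + HSqe 3 (b1 t) + HSqe 3 (b2 t) + HSqe 3 (ρ t))
      ≤ E0 ρ u1 u2 b1 b2 t := by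
    refine le_trans ?_ (le_self_add (a := ⨆ τ ∈ Icc (0:ℝ) t,
      (HSqe 3 (u1 τ) + HSqe 3 (u2 τ) + HSqe 3 (b1 τ) + HSqe 3 (b2 τ) + HSqe 3 (ρ τ))))
    exact le_biSup (f := fun τ => HSqe 3 (u1 τ) + HSqe 3 (u2 τ) + HSqe 3 (b1 τ)
      + HSqe 3 (b2 τ) + HSqe 3 (ρ τ)) ht'
  have hsum1 : (HSqe 3 (u1 t) + HSqe 3 (u2 t) + HSqe 3 (b1 t) + HSqe 3 (b2 t) + HSqe 3 (ρ t))
      ≤ 1 := le_trans hsup hE0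
  have hu2H : HSqe 3 (u2 t) ≤ 1 := by
    refine le_trans ?_ hsum1
    calc HSqe 3 (u2 t) ≤ HSqe 3 (u1 t) + HSqe 3 (u2 t) := le_add_self
      _ ≤ HSqe 3 (u1 t) + HSqe 3 (u2 t) + HSqe 3 (b1 t) := le_self_add
      _ ≤ HSqe 3 (u1 t) + HSqe 3 (u2 t) + HSqe 3 (b1 t) + HSqe 3 (b2 t) := le_self_add
      _ ≤ _ := le_self_add
  have hb2H : HSqe 3 (b2 t) ≤ 1 := by
    refine le_trans ?_ hsum1
    calc HSqe 3 (b2 t) ≤ HSqe 3 (u1 t) + HSqe 3 (u2 t) + HSqe 3 (b1 t) + HSqe 3 (b2 t) :=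
          le_add_self
      _ ≤ _ := le_self_add
  have hρH : HSqe 3 (ρ t) ≤ 1 := le_add_self.trans hsum1
  have hrH : HSqe 3 r ≤ 1 := by
    rcases hrch with h | h <;> (subst h; first | exact hb2H | exact hρH)
  have hsH : HSqe 3 s ≤ 1 := by
    rcases hsch with h | h <;> (subst h; first | exact hb2H | exact hρH)
  obtain ⟨hu0, hu1', hu2', _⟩ := Sq_comps hu2H
  obtain ⟨hr0, hr1, hr2, hr12⟩ := Sq_comps hrH
  obtain ⟨hs0, hs1, hs2, hs12⟩ := Sq_comps hsH
  have hSu : Sq volume (u2 t) ≠ ⊤ := ne_top_of_le_ne_top ENNReal.one_ne_top hu0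
  have hSu1 : Sq volume (d1 (u2 t)) ≠ ⊤ := ne_top_of_le_ne_top ENNReal.one_ne_top hu1'
  have hSu2 : Sq volume (d2 (u2 t)) ≠ ⊤ := ne_top_of_le_ne_top ENNReal.one_ne_top hu2'
  -- apply the key lemma
  have hkey := keylemma hMpos hFsm hM1 hM2 hu2sm hrsm hssm hSu hSu1 hSu2
    hr0 hr1 hr2 hr12 hs0 hs1 hs2 hs12
  -- convert to the real-valued statement
  set Su := Sq volume (u2 t) with hSudef
  set Su1 := Sq volume (d1 (u2 t)) with hSu1def
  set X : ℝ≥0∞ := (Sq volume r) ^ (1/2:ℝ) + (Sq volume s) ^ (1/2:ℝ) with hXdef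
  set Y : ℝ≥0∞ := (Sq volume (d2 r)) ^ (1/2:ℝ) + (Sq volume (d2 s)) ^ (1/2:ℝ) with hYdef
  have hfr0 : Sq volume r ≠ ⊤ := ne_top_of_le_ne_top ENNReal.one_ne_top hr0
  have hfs0 : Sq volume s ≠ ⊤ := ne_top_of_le_ne_top ENNReal.one_ne_top hs0
  have hfr2 : Sq volume (d2 r) ≠ ⊤ := ne_top_of_le_ne_top ENNReal.one_ne_top hr2
  have hfs2 : Sq volume (d2 s) ≠ ⊤ := ne_top_of_le_ne_top ENNReal.one_ne_top hs2
  have hXne : X ≠ ⊤ := by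
    rw [hXdef]
    exact ENNReal.add_ne_top.2 ⟨ENNReal.rpow_ne_top_of_nonneg (by norm_num) hfr0,
      ENNReal.rpow_ne_top_of_nonneg (by norm_num) hfs0⟩
  have hYne : Y ≠ ⊤ := by
    rw [hYdef]
    exact ENNReal.add_ne_top.2 ⟨ENNReal.rpow_ne_top_of_nonneg (by norm_num) hfr2,
      ENNReal.rpow_ne_top_of_nonneg (by norm_num) hfs2⟩
  have hRne : ENNReal.ofReal (8 * M) * (Su ^ (1/4:ℝ) * Su1 ^ (1/4:ℝ)
      * X ^ (1/2:ℝ) * Y ^ (3/2:ℝ)) ≠ ⊤ := by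
    refine ENNReal.mul_ne_top ENNReal.ofReal_ne_top ?_
    refine ENNReal.mul_ne_top (ENNReal.mul_ne_top (ENNReal.mul_ne_top ?_ ?_) ?_) ?_
    · exact ENNReal.rpow_ne_top_of_nonneg (by norm_num) hSu
    · exact ENNReal.rpow_ne_top_of_nonneg (by norm_num) hSu1
    · exact ENNReal.rpow_ne_top_of_nonneg (by norm_num) hXne
    · exact ENNReal.rpow_ne_top_of_nonneg (by norm_num) hYne
  have habs : |∫ x, d2 (u2 t) x * f (r x) (s x)|
      = |∫ z : ℝ × ℝ, d2 (u2 t) z * F (r z, s z)| := rfl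
  rw [habs]
  have hmono := ENNReal.toReal_mono hRne hkey
  rw [ENNReal.toReal_ofReal (abs_nonneg _)] at hmono
  refine le_trans hmono (le_of_eq ?_)
  -- identify the real quantities
  have eu : L2R (u2 t) ^ ((1:ℝ)/2) = (Su ^ (1/4:ℝ)).toReal := by
    rw [L2R, L2e_eq, ENNReal.toReal_rpow, rpow_quarter, hSudef]
  have eu1 : L2R (d1 (u2 t)) ^ ((1:ℝ)/2) = (Su1 ^ (1/4:ℝ)).toReal := by
    rw [L2R, L2e_eq, ENNReal.toReal_rpow, rpow_quarter, hSu1def]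
  have eX : (L2R r + L2R s) ^ ((1:ℝ)/2) = (X ^ (1/2:ℝ)).toReal := by
    rw [L2R, L2R, L2e_eq, L2e_eq,
      ← ENNReal.toReal_add (ENNReal.rpow_ne_top_of_nonneg (by norm_num) hfr0)
        (ENNReal.rpow_ne_top_of_nonneg (by norm_num) hfs0),
      ENNReal.toReal_rpow]
  have eY : (L2R (d2 r) + L2R (d2 s)) ^ ((3:ℝ)/2) = (Y ^ (3/2:ℝ)).toReal := by
    rw [L2R, L2R, L2e_eq, L2e_eq,
      ← ENNReal.toReal_add (ENNReal.rpow_ne_top_of_nonneg (by norm_num) hfr2)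
        (ENNReal.rpow_ne_top_of_nonneg (by norm_num) hfs2),
      ENNReal.toReal_rpow]
  rw [eu, eu1, eX, eY, ENNReal.toReal_mul, ENNReal.toReal_ofReal (by positivity),
    ENNReal.toReal_mul, ENNReal.toReal_mul, ENNReal.toReal_mul]
  ring

end SecK

end
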